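/- arXiv:2503.02446 — 6 statements merged into one kernel-verified Lean document; each statement's English description precedes it below -/
import Mathlib

section
/- Let α > 1/2 and let ψ : ℝ → ℝ be a positive C¹ function with ψ₁⟨x⟩^α ≤ ψ(x) ≤ ψ₂⟨x⟩^α for constants ψ₁, ψ₂ > 0, where ⟨x⟩ = √(1+x²). Then there is a constant C > 0 such that for every compactly supported C¹ function g : ℝ → ℝ, ‖⟨·⟩^{α-1} g‖_{L²} ≤ C ‖⟨·⟩^α g'‖_{L²}. -/
open MeasureTheory Real Filter

private lemma hda_q (x : ℝ) : HasDerivAt (fun x : ℝ => 1 + x^2) (2*x) x := by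
  simpa using ((hasDerivAt_pow 2 x).const_add 1)

private lemma hda_rpow (p x : ℝ) :
    HasDerivAt (fun x : ℝ => (1+x^2) ^ p) (p * (1+x^2) ^ (p-1) * (2*x)) x := by
  have hx : (0:ℝ) < 1 + x^2 := by positivity
  exact (Real.hasDerivAt_rpow_const (Or.inl hx.ne')).comp x (hda_q x)

private lemma cont_rpow (p : ℝ) : Continuous (fun x : ℝ => (1+x^2) ^ p) := by
  apply Continuous.rpow_const (by continuity)
  intro x
  exact Or.inl (by positivity)

private lemma sq_helper (x p v : ℝ) :
    (Real.sqrt (1+x^2) ^ p * v)^2 = (1+x^2) ^ p * v^2 := by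
  have hy : (0:ℝ) < 1 + x^2 := by positivity
  rw [mul_pow, ← Real.rpow_natCast (Real.sqrt (1+x^2) ^ p) 2,
    ← Real.rpow_mul (Real.sqrt_nonneg _), Real.sqrt_eq_rpow, ← Real.rpow_mul hy.le]
  have h2 : (1/2 * (p * ((2:ℕ):ℝ)) : ℝ) = p := by push_cast; ring
  rw [h2]

theorem stmt0 (α : ℝ) (hα : 1/2 < α) (ψ : ℝ → ℝ) (hψC1 : ContDiff ℝ 1 ψ)
    (hψpos : ∀ x, 0 < ψ x) (ψ1 ψ2 : ℝ) (hψ1 : 0 < ψ1) (hψ2 : 0 < ψ2)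
    (hlow : ∀ x : ℝ, ψ1 * Real.sqrt (1 + x^2) ^ α ≤ ψ x)
    (hhigh : ∀ x : ℝ, ψ x ≤ ψ2 * Real.sqrt (1 + x^2) ^ α) :
    ∃ C > 0, ∀ g : ℝ → ℝ, ContDiff ℝ 1 g → HasCompactSupport g →
      (∫ x : ℝ, (Real.sqrt (1 + x^2) ^ (α - 1) * g x)^2) ^ ((1:ℝ)/2) ≤
        C * (∫ x : ℝ, (Real.sqrt (1 + x^2) ^ α * deriv g x)^2) ^ ((1:ℝ)/2) := by
  set c : ℝ := min 1 (2*α - 1) with hc_def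
  have hc : 0 < c := lt_min one_pos (by linarith)
  refine ⟨2/c, by positivity, ?_⟩
  intro g hg hgc
  -- rewrite integrands
  have hL : ∀ x : ℝ, (Real.sqrt (1+x^2) ^ (α-1) * g x)^2 = (1+x^2) ^ (α-1) * (g x)^2 :=
    fun x => sq_helper x (α-1) (g x)
  have hR : ∀ x : ℝ, (Real.sqrt (1+x^2) ^ α * deriv g x)^2 = (1+x^2) ^ α * (deriv g x)^2 :=
    fun x => sq_helper x α (deriv g x)
  simp only [hL, hR]
  set u : ℝ → ℝ := fun x => (1+x^2) ^ (α-1) * (g x)^2 with hu_def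
  set v : ℝ → ℝ := fun x => (1+x^2) ^ α * (deriv g x)^2 with hv_def
  have hgd : Differentiable ℝ g := hg.differentiable one_ne_zero
  have hgd' : Continuous (deriv g) := hg.continuous_deriv le_rfl
  have hgcont : Continuous g := hg.continuous
  -- φ and its derivative
  set φ : ℝ → ℝ := fun x => x * (1+x^2) ^ (α-1) with hφ_def
  set φ' : ℝ → ℝ := fun x => (1+x^2) ^ (α-1) + x * ((α-1) * (1+x^2) ^ (α-1-1) * (2*x)) with hφ'_def
  have hdφ : ∀ x, HasDerivAt φ (φ' x) x := by
    intro x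
    exact ((hasDerivAt_id x).mul (hda_rpow (α-1) x)).congr_deriv (by simp only [hφ'_def, id, one_mul])
  -- F = φ * g^2
  set F : ℝ → ℝ := fun x => φ x * (g x)^2 with hF_def
  set f1 : ℝ → ℝ := fun x => φ' x * (g x)^2 with hf1_def
  set f2 : ℝ → ℝ := fun x => φ x * (2 * g x * deriv g x) with hf2_def
  have hdF : ∀ x, HasDerivAt F (f1 x + f2 x) x := by
    intro x
    have hgg : HasDerivAt (fun x => (g x)^2) (2 * g x * deriv g x) x := by
      have h := (hasDerivAt_pow 2 (g x)).comp x (hgd x).hasDerivAt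
      simp [mul_comm, mul_assoc] at h ⊢
      exact h
    exact (hdφ x).mul hgg
  -- continuity facts
  have hφcont : Continuous φ := continuous_id.mul (cont_rpow (α-1))
  have hφ'cont : Continuous φ' := by
    apply Continuous.add (cont_rpow (α-1))
    exact continuous_id.mul ((continuous_const.mul (cont_rpow (α-1-1))).mul (by continuity))
  have hsupp : ∀ h : ℝ → ℝ, (∀ x, g x = 0 → h x = 0) → HasCompactSupport h := by
    intro h hh
    apply hgc.mono
    intro x hx
    simp only [Function.mem_support] at hx ⊢
    intro hgx
    exact hx (hh x hgx)
  have hsuppd : ∀ h : ℝ → ℝ, (∀ x, deriv g x = 0 → h x = 0) → HasCompactSupport h := by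
    intro h hh
    apply (hgc.deriv).mono
    intro x hx
    simp only [Function.mem_support] at hx ⊢
    intro hgx
    exact hx (hh x hgx)
  -- integrability
  have hInt_u : Integrable u := by
    apply Continuous.integrable_of_hasCompactSupport
    · exact (cont_rpow (α-1)).mul (hgcont.pow 2)
    · exact hsupp u (fun x hx => by simp [hu_def, hx])
  have hInt_v : Integrable v := by
    apply Continuous.integrable_of_hasCompactSupport
    · exact (cont_rpow α).mul (hgd'.pow 2)
    · exact hsuppd v (fun x hx => by simp [hv_def, hx])
  have hInt_f1 : Integrable f1 := by
    apply Continuous.integrable_of_hasCompactSupport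
    · exact hφ'cont.mul (hgcont.pow 2)
    · exact hsupp f1 (fun x hx => by simp [hf1_def, hx])
  have hInt_f2 : Integrable f2 := by
    apply Continuous.integrable_of_hasCompactSupport
    · exact hφcont.mul ((continuous_const.mul hgcont).mul hgd')
    · exact hsupp f2 (fun x hx => by simp [hf2_def, hx])
  have hInt_F : Integrable F := by
    apply Continuous.integrable_of_hasCompactSupport
    · exact hφcont.mul (hgcont.pow 2)
    · exact hsupp F (fun x hx => by simp [hF_def, hx])
  -- integration by parts: ∫ f1 = - ∫ f2
  have hIBP : ∫ x, f1 x = ∫ x, -f2 x := by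
    have h0 : ∫ x, (f1 x + f2 x) = 0 :=
      integral_eq_zero_of_hasDerivAt_of_integrable hdF (hInt_f1.add hInt_f2) hInt_F
    rw [integral_add hInt_f1 hInt_f2] at h0
    rw [integral_neg]
    linarith
  set I : ℝ := ∫ x, u x with hI_def
  set J : ℝ := ∫ x, v x with hJ_def
  have hI0 : 0 ≤ I := integral_nonneg (fun x => by
    have : (0:ℝ) ≤ (1+x^2) ^ (α-1) := Real.rpow_nonneg (by positivity) _
    positivity)
  have hJ0 : 0 ≤ J := integral_nonneg (fun x => by
    have : (0:ℝ) ≤ (1+x^2) ^ α := Real.rpow_nonneg (by positivity) _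
    positivity)
  -- pointwise lower bound: c * u ≤ f1
  have hP1 : ∀ x, c * u x ≤ f1 x := by
    intro x
    have hy : (0:ℝ) < 1 + x^2 := by positivity
    have hy2 : (0:ℝ) ≤ (1+x^2) ^ (α-1-1) := Real.rpow_nonneg hy.le _
    have hsplit : (1+x^2) ^ (α-1) = (1+x^2) ^ (α-1-1) * (1+x^2) := by
      rw [← Real.rpow_add_one hy.ne']
      ring_nf
    have key : c * (1+x^2) ^ (α-1) ≤ (1+x^2) ^ (α-1) + x * ((α-1) * (1+x^2) ^ (α-1-1) * (2*x)) := by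
      rw [hsplit]
      have h1 : c ≤ 1 := min_le_left _ _
      have h2 : c ≤ 2*α - 1 := min_le_right _ _
      nlinarith [sq_nonneg x, mul_nonneg hy2 (sq_nonneg x)]
    have hg2 : (0:ℝ) ≤ (g x)^2 := sq_nonneg _
    calc c * u x = (c * (1+x^2) ^ (α-1)) * (g x)^2 := by rw [hu_def]; ring
      _ ≤ ((1+x^2) ^ (α-1) + x * ((α-1) * (1+x^2) ^ (α-1-1) * (2*x))) * (g x)^2 :=
          mul_le_mul_of_nonneg_right key hg2
      _ = f1 x := by rw [hf1_def]
  -- pointwise upper bound: -f2 ≤ (c/2) u + (2/c) v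
  have hP2 : ∀ x, -f2 x ≤ (c/2) * u x + (2/c) * v x := by
    intro x
    have hy : (0:ℝ) < 1 + x^2 := by positivity
    set a : ℝ := (1+x^2) ^ ((α-1)/2) * |g x| with ha_def
    set b : ℝ := (1+x^2) ^ (α/2) * |deriv g x| with hb_def
    have ha0 : 0 ≤ a := mul_nonneg (Real.rpow_nonneg hy.le _) (abs_nonneg _)
    have hb0 : 0 ≤ b := mul_nonneg (Real.rpow_nonneg hy.le _) (abs_nonneg _)
    have ha2 : a^2 = u x := by
      rw [ha_def, hu_def, mul_pow, sq_abs, ← Real.rpow_natCast ((1+x^2) ^ ((α-1)/2)) 2,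
        ← Real.rpow_mul hy.le]
      norm_num
    have hb2 : b^2 = v x := by
      rw [hb_def, hv_def, mul_pow, sq_abs, ← Real.rpow_natCast ((1+x^2) ^ (α/2)) 2,
        ← Real.rpow_mul hy.le]
      norm_num
    have habs : -f2 x ≤ 2 * a * b := by
      have h1 : -f2 x ≤ |f2 x| := neg_le_abs _
      have h2 : |f2 x| = |x| * (1+x^2) ^ (α-1) * (2 * |g x| * |deriv g x|) := by
        rw [hf2_def, hφ_def]
        simp only [abs_mul]
        rw [abs_of_nonneg (Real.rpow_nonneg hy.le _), abs_of_nonneg (by norm_num : (0:ℝ) ≤ 2)]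
      have hxle : |x| ≤ (1+x^2) ^ ((1:ℝ)/2) := by
        rw [← Real.sqrt_eq_rpow, ← Real.sqrt_sq_eq_abs]
        exact Real.sqrt_le_sqrt (by nlinarith)
      have h3 : |x| * (1+x^2) ^ (α-1) ≤ (1+x^2) ^ ((1:ℝ)/2) * (1+x^2) ^ (α-1) :=
        mul_le_mul_of_nonneg_right hxle (Real.rpow_nonneg hy.le _)
      have h4 : (1+x^2) ^ ((1:ℝ)/2) * (1+x^2) ^ (α-1) = (1+x^2) ^ ((α-1)/2) * (1+x^2) ^ (α/2) := by
        rw [← Real.rpow_add hy, ← Real.rpow_add hy]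
        ring_nf
      have h5 : |f2 x| ≤ ((1+x^2) ^ ((α-1)/2) * (1+x^2) ^ (α/2)) * (2 * |g x| * |deriv g x|) := by
        rw [h2, ← h4]
        apply mul_le_mul_of_nonneg_right h3
        positivity
      calc -f2 x ≤ |f2 x| := h1
        _ ≤ ((1+x^2) ^ ((α-1)/2) * (1+x^2) ^ (α/2)) * (2 * |g x| * |deriv g x|) := h5
        _ = 2 * a * b := by rw [ha_def, hb_def]; ring
    have hAM : 2 * a * b ≤ (c/2) * a^2 + (2/c) * b^2 := by
      rw [div_mul_eq_mul_div, div_mul_eq_mul_div, div_add_div _ _ (by norm_num : (2:ℝ) ≠ 0) hc.ne',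
        le_div_iff₀ (by positivity)]
      nlinarith [sq_nonneg (c*a - 2*b)]
    rw [← ha2, ← hb2]
    linarith
  -- combine
  have step1 : c * I ≤ ∫ x, f1 x := by
    rw [hI_def, ← integral_const_mul]
    exact integral_mono (hInt_u.const_mul c) hInt_f1 hP1
  have step2 : ∫ x, -f2 x ≤ (c/2) * I + (2/c) * J := by
    have : ∫ x, ((c/2) * u x + (2/c) * v x) = (c/2) * I + (2/c) * J := by
      rw [integral_add ((hInt_u.const_mul _)) ((hInt_v.const_mul _)), integral_const_mul,
        integral_const_mul]
    rw [← this]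
    exact integral_mono hInt_f2.neg ((hInt_u.const_mul _).add (hInt_v.const_mul _)) hP2
  have hkey : c * I ≤ (c/2) * I + (2/c) * J := by
    rw [hIBP] at step1
    linarith
  have hIJ : I ≤ (2/c)^2 * J := by
    have h1 : (c/2) * I ≤ (2/c) * J := by linarith
    have h2 : I ≤ (2/c) * ((2/c) * J) := by
      rw [← mul_le_mul_iff_right₀ (show (0:ℝ) < c/2 by positivity)]
      calc (c/2) * I ≤ (2/c) * J := h1
        _ = (c/2) * ((2/c) * ((2/c) * J)) := by field_simp
    calc I ≤ (2/c) * ((2/c) * J) := h2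
      _ = (2/c)^2 * J := by ring
  calc I ^ ((1:ℝ)/2) ≤ ((2/c)^2 * J) ^ ((1:ℝ)/2) :=
        Real.rpow_le_rpow hI0 hIJ (by norm_num)
    _ = 2/c * J ^ ((1:ℝ)/2) := by
        rw [Real.mul_rpow (by positivity) hJ0, ← Real.rpow_natCast (2/c) 2,
          ← Real.rpow_mul (by positivity)]
        norm_num
end

section
/- Let α > 1/2. There exists C > 0 such that for every compactly supported C¹ function g : ℝ → ℝ and every x ∈ ℝ, ⟨x⟩^{2α-1} |g(x)|² ≤ C ‖⟨·⟩^α g'‖_{L²}², i.e. ‖⟨·⟩^{α-1/2} g‖_{L^∞} ≤ C ‖⟨·⟩^α g'‖_{L²}. -/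
open MeasureTheory Real Filter Set

lemma aux_cont (α : ℝ) : Continuous (fun y : ℝ => (1 + y^2) ^ (-α)) := by
  apply Continuous.rpow_const (by continuity)
  intro x; left; positivity

lemma aux_maj {α : ℝ} (hα : 1/2 < α) {y : ℝ} (hy : 1 ≤ y) :
    (1 + y^2) ^ (-α) ≤ y ^ (-(2*α)) := by
  have hy0 : 0 < y := lt_of_lt_of_le one_pos hy
  have h1 : (y^2 : ℝ) ^ (-α) = y ^ (-(2*α)) := by
    rw [← Real.rpow_natCast y 2, ← Real.rpow_mul hy0.le]
    congr 1; push_cast; ring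
  rw [← h1]
  apply Real.rpow_le_rpow_of_nonpos (by positivity) (by nlinarith) (by linarith)

lemma aux_int {α : ℝ} (hα : 1/2 < α) :
    IntegrableOn (fun y : ℝ => (1 + y^2) ^ (-α)) (Ioi (0:ℝ)) := by
  rw [← Set.Ioc_union_Ioi_eq_Ioi (le_of_lt one_pos)]
  apply IntegrableOn.union
  · exact ((aux_cont α).integrableOn_Icc).mono_set Set.Ioc_subset_Icc_self
  · have hmaj : IntegrableOn (fun y:ℝ => y ^ (-(2*α))) (Ioi 1) :=
      integrableOn_Ioi_rpow_of_lt (by linarith) one_pos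
    apply hmaj.integrable.mono ((aux_cont α).aestronglyMeasurable)
    filter_upwards [ae_restrict_mem measurableSet_Ioi] with y hy
    have h1 : (1:ℝ) ≤ y := le_of_lt hy
    rw [Real.norm_of_nonneg (by positivity), Real.norm_of_nonneg (by positivity)]
    exact aux_maj hα h1

lemma aux_bound {α : ℝ} (hα : 1/2 < α) {x : ℝ} (hx : 0 ≤ x) :
    ∫ y in Ioi x, (1 + y^2) ^ (-α) ≤
      ((1 + 1/(2*α-1)) * 2 ^ (α - 1/2)) * (1 + x^2) ^ (1/2 - α) := by
  have h2α : (0:ℝ) < 2*α - 1 := by linarith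
  have hcc' : (2:ℝ) ^ (α - 1/2) * 2 ^ ((1:ℝ)/2 - α) = 1 := by
    rw [← Real.rpow_add two_pos]; norm_num
  have hc : (0:ℝ) < 2 ^ (α - 1/2) := Real.rpow_pos_of_pos two_pos _
  have hc' : (0:ℝ) < 2 ^ ((1:ℝ)/2 - α) := Real.rpow_pos_of_pos two_pos _
  rcases le_or_gt x 1 with hx1 | hx1
  · -- small x
    have hIoi1 : ∫ y in Ioi (1:ℝ), (1 + y^2) ^ (-α) ≤ 1/(2*α-1) := by
      calc ∫ y in Ioi (1:ℝ), (1 + y^2) ^ (-α)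
          ≤ ∫ y in Ioi (1:ℝ), y ^ (-(2*α)) := by
            apply setIntegral_mono_on ((aux_int hα).mono_set (Set.Ioi_subset_Ioi one_pos.le))
              (integrableOn_Ioi_rpow_of_lt (by linarith) one_pos) measurableSet_Ioi
            intro y hy; exact aux_maj hα (le_of_lt hy)
        _ = -(1:ℝ) ^ (-(2*α)+1) / (-(2*α)+1) := integral_Ioi_rpow_of_lt (by linarith) one_pos
        _ = 1/(2*α-1) := by
            rw [Real.one_rpow, div_eq_div_iff (by linarith) (by linarith)]; ring
    have hIoc : ∫ y in Ioc (0:ℝ) 1, (1 + y^2) ^ (-α) ≤ 1 := by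
      calc ∫ y in Ioc (0:ℝ) 1, (1 + y^2) ^ (-α)
          ≤ ∫ _ in Ioc (0:ℝ) 1, (1:ℝ) := by
            apply setIntegral_mono_on ((aux_int hα).mono_set Set.Ioc_subset_Ioi_self)
              (integrableOn_const (by simp)) measurableSet_Ioc
            intro y _
            exact Real.rpow_le_one_of_one_le_of_nonpos (by nlinarith) (by linarith)
        _ = 1 := by simp
    have hsplit : ∫ y in Ioi (0:ℝ), (1 + y^2) ^ (-α) ≤ 1 + 1/(2*α-1) := by
      rw [← Set.Ioc_union_Ioi_eq_Ioi (le_of_lt one_pos),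
        setIntegral_union (Set.Ioc_disjoint_Ioi le_rfl) measurableSet_Ioi
          ((aux_int hα).mono_set Set.Ioc_subset_Ioi_self)
          ((aux_int hα).mono_set (Set.Ioi_subset_Ioi one_pos.le))]
      exact add_le_add hIoc hIoi1
    have hmono : ∫ y in Ioi x, (1 + y^2) ^ (-α) ≤ ∫ y in Ioi (0:ℝ), (1 + y^2) ^ (-α) := by
      apply setIntegral_mono_set (aux_int hα)
        (Eventually.of_forall (fun y => by positivity))
      exact HasSubset.Subset.eventuallyLE (Set.Ioi_subset_Ioi hx)
    have hs : (2:ℝ) ^ ((1:ℝ)/2 - α) ≤ (1 + x^2) ^ ((1:ℝ)/2 - α) :=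
      Real.rpow_le_rpow_of_nonpos (by positivity) (by nlinarith) (by linarith)
    have hfin := hmono.trans hsplit
    have h3 := mul_le_mul_of_nonneg_left hs
      (le_of_lt (mul_pos (by positivity : (0:ℝ) < 1 + 1/(2*α-1)) hc))
    have h4 : (1 + 1/(2*α-1)) * 2 ^ (α - 1/2) * (2 ^ ((1:ℝ)/2 - α)) = 1 + 1/(2*α-1) := by
      calc (1 + 1/(2*α-1)) * 2 ^ (α - 1/2) * (2 ^ ((1:ℝ)/2 - α))
          = (1 + 1/(2*α-1)) * (2 ^ (α - 1/2) * 2 ^ ((1:ℝ)/2 - α)) := by ring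
        _ = 1 + 1/(2*α-1) := by rw [hcc']; ring
    rw [h4] at h3
    linarith
  · -- large x
    have hx0 : (0:ℝ) < x := lt_trans one_pos hx1
    have ht : (0:ℝ) < x ^ (1-2*α) := Real.rpow_pos_of_pos hx0 _
    have hs0 : (0:ℝ) < (1 + x^2) ^ ((1:ℝ)/2 - α) := Real.rpow_pos_of_pos (by positivity) _
    have e2 : ((2:ℝ)*x^2) ^ ((1:ℝ)/2-α) = 2 ^ ((1:ℝ)/2-α) * x ^ (1-2*α) := by
      rw [Real.mul_rpow two_pos.le (by positivity), ← Real.rpow_natCast x 2,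
        ← Real.rpow_mul hx0.le]
      congr 1; push_cast; ring
    have e1 : 2 ^ ((1:ℝ)/2-α) * x ^ (1-2*α) ≤ (1 + x^2) ^ ((1:ℝ)/2 - α) := by
      rw [← e2]
      exact Real.rpow_le_rpow_of_nonpos (by positivity) (by nlinarith) (by linarith)
    calc ∫ y in Ioi x, (1 + y^2) ^ (-α)
        ≤ ∫ y in Ioi x, y ^ (-(2*α)) := by
          apply setIntegral_mono_on ((aux_int hα).mono_set (Set.Ioi_subset_Ioi hx))
            (integrableOn_Ioi_rpow_of_lt (by linarith) hx0) measurableSet_Ioi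
          intro y hy; exact aux_maj hα (le_trans hx1.le (le_of_lt hy))
      _ = -x ^ (-(2*α)+1) / (-(2*α)+1) := integral_Ioi_rpow_of_lt (by linarith) hx0
      _ = x ^ (1-2*α) / (2*α-1) := by
          rw [show -(2*α)+1 = 1-2*α by ring, div_eq_div_iff (by linarith) (by linarith)]; ring
      _ ≤ ((1 + 1/(2*α-1)) * 2 ^ (α - 1/2)) * (1 + x^2) ^ (1/2 - α) := by
          have h3 := mul_le_mul_of_nonneg_left e1
            (le_of_lt (mul_pos (by positivity : (0:ℝ) < 1 + 1/(2*α-1)) hc))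
          have h4 : (1 + 1/(2*α-1)) * 2 ^ (α - 1/2) * (2 ^ ((1:ℝ)/2 - α) * x ^ (1-2*α))
              = (1 + 1/(2*α-1)) * x ^ (1-2*α) := by
            calc (1 + 1/(2*α-1)) * 2 ^ (α - 1/2) * (2 ^ ((1:ℝ)/2 - α) * x ^ (1-2*α))
                = (1 + 1/(2*α-1)) * (2 ^ (α - 1/2) * 2 ^ ((1:ℝ)/2 - α)) * x ^ (1-2*α) := by ring
              _ = (1 + 1/(2*α-1)) * x ^ (1-2*α) := by rw [hcc']; ring
          rw [h4] at h3
          have h5 : x ^ (1-2*α) / (2*α-1) ≤ (1 + 1/(2*α-1)) * x ^ (1-2*α) := by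
            rw [div_le_iff₀ h2α]
            have he : (1 + 1/(2*α-1)) * x ^ (1-2*α) * (2*α-1)
                = x ^ (1-2*α) * (2*α-1) + x ^ (1-2*α) := by field_simp
            rw [he]
            nlinarith [mul_pos ht h2α]
          linarith

lemma aux_ftc {g : ℝ → ℝ} (hg : ContDiff ℝ 1 g) (hs : HasCompactSupport g) (a : ℝ) :
    ∫ y in Ioi a, deriv g y = - g a := by
  have htend : Tendsto g atTop (nhds 0) := by
    obtain ⟨R, hR⟩ := hs.isCompact.bddAbove
    apply Tendsto.congr' _ tendsto_const_nhds
    filter_upwards [eventually_gt_atTop R] with y hy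
    exact (image_eq_zero_of_notMem_tsupport (fun hmem => absurd (hR hmem) (not_le.2 hy))).symm
  have := integral_Ioi_of_hasDerivAt_of_tendsto (a := a) (m := 0)
    ((hg.continuous).continuousWithinAt)
    (fun x _ => (hg.differentiable one_ne_zero x).hasDerivAt)
    (((hg.continuous_deriv le_rfl).integrable_of_hasCompactSupport hs.deriv).integrableOn) htend
  rw [this]; ring

lemma aux_cs {f h : ℝ → ℝ} {s : Set ℝ} (hf0 : ∀ y, 0 ≤ f y) (hh0 : ∀ y, 0 ≤ h y)
    (hfm : AEStronglyMeasurable f (volume.restrict s))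
    (hhm : AEStronglyMeasurable h (volume.restrict s))
    (hf2 : IntegrableOn (fun y => f y ^ 2) s) (hh2 : IntegrableOn (fun y => h y ^ 2) s) :
    (∫ y in s, f y * h y) ^ 2 ≤ (∫ y in s, f y ^ 2) * (∫ y in s, h y ^ 2) := by
  have hconj : Real.HolderConjugate 2 2 := ⟨by norm_num, by norm_num, by norm_num⟩
  have hf2' : MemLp f (ENNReal.ofReal 2) (volume.restrict s) := by
    rw [show ENNReal.ofReal 2 = 2 by norm_num]
    exact (memLp_two_iff_integrable_sq hfm).2 hf2
  have hh2' : MemLp h (ENNReal.ofReal 2) (volume.restrict s) := by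
    rw [show ENNReal.ofReal 2 = 2 by norm_num]
    exact (memLp_two_iff_integrable_sq hhm).2 hh2
  have key := integral_mul_le_Lp_mul_Lq_of_nonneg hconj
    (Eventually.of_forall hf0) (Eventually.of_forall hh0) hf2' hh2'
  have hrw : ∀ u : ℝ → ℝ, (∫ y in s, u y ^ (2:ℝ)) = ∫ y in s, u y ^ 2 := by
    intro u
    congr 1; funext y
    rw [show (2:ℝ) = ((2:ℕ):ℝ) by norm_num, Real.rpow_natCast]
  rw [hrw, hrw] at key
  have hA : 0 ≤ ∫ y in s, f y ^ 2 := integral_nonneg (fun y => sq_nonneg _)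
  have hB : 0 ≤ ∫ y in s, h y ^ 2 := integral_nonneg (fun y => sq_nonneg _)
  have h0 : 0 ≤ ∫ y in s, f y * h y :=
    integral_nonneg (fun y => mul_nonneg (hf0 y) (hh0 y))
  calc (∫ y in s, f y * h y) ^ 2
      ≤ ((∫ y in s, f y ^ 2) ^ ((1:ℝ)/2) * (∫ y in s, h y ^ 2) ^ ((1:ℝ)/2)) ^ 2 := by
        apply pow_le_pow_left₀ h0 (by simpa using key)
    _ = (∫ y in s, f y ^ 2) * (∫ y in s, h y ^ 2) := by
        rw [mul_pow, ← Real.rpow_natCast ((∫ y in s, f y ^ 2) ^ ((1:ℝ)/2)) 2,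
          ← Real.rpow_natCast ((∫ y in s, h y ^ 2) ^ ((1:ℝ)/2)) 2,
          ← Real.rpow_mul hA, ← Real.rpow_mul hB]
        norm_num

lemma aux_half {α : ℝ} (hα : 1/2 < α) {g : ℝ → ℝ} (hg : ContDiff ℝ 1 g)
    (hs : HasCompactSupport g) {x : ℝ} (hx : 0 ≤ x) :
    (1 + x^2) ^ (α - 1/2) * (g x)^2 ≤
      ((1 + 1/(2*α-1)) * 2 ^ (α - 1/2)) * ∫ y, (1 + y^2) ^ α * (deriv g y)^2 := by
  have h2α : (0:ℝ) < 2*α - 1 := by linarith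
  set K : ℝ := (1 + 1/(2*α-1)) * 2 ^ (α - 1/2) with hK
  have hK0 : 0 < K := mul_pos (by positivity) (Real.rpow_pos_of_pos two_pos _)
  set I : ℝ := ∫ y, (1 + y^2) ^ α * (deriv g y)^2 with hI
  have hwcont : Continuous (fun y : ℝ => (1 + y^2) ^ α) := by
    apply Continuous.rpow_const (by continuity); intro y; left; positivity
  have hIcont : Continuous (fun y : ℝ => (1 + y^2) ^ α * (deriv g y)^2) :=
    hwcont.mul ((hg.continuous_deriv le_rfl).pow 2)
  have hIcs : HasCompactSupport (fun y : ℝ => (1 + y^2) ^ α * (deriv g y)^2) := by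
    have h2 : HasCompactSupport (fun y => (deriv g y)^2) :=
      hs.deriv.comp_left (g := fun t : ℝ => t^2) (by norm_num)
    exact h2.mul_left
  have hIint : Integrable (fun y : ℝ => (1 + y^2) ^ α * (deriv g y)^2) :=
    hIcont.integrable_of_hasCompactSupport hIcs
  have hI0 : 0 ≤ I := integral_nonneg (fun y => by positivity)
  -- the two Cauchy–Schwarz factors
  set f : ℝ → ℝ := fun y => (1 + y^2) ^ (-(α/2)) with hf
  set h : ℝ → ℝ := fun y => (1 + y^2) ^ (α/2) * |deriv g y| with hh
  have hfc : Continuous f := by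
    apply Continuous.rpow_const (by continuity); intro y; left; positivity
  have hwc2 : Continuous (fun y : ℝ => (1 + y^2) ^ (α/2)) := by
    apply Continuous.rpow_const (by continuity); intro y; left; positivity
  have hhc : Continuous h := hwc2.mul (hg.continuous_deriv le_rfl).abs
  have hf2 : (fun y => f y ^ 2) = fun y : ℝ => (1 + y^2) ^ (-α) := by
    funext y
    rw [hf, ← Real.rpow_natCast ((1 + y^2) ^ (-(α/2))) 2, ← Real.rpow_mul (by positivity)]
    norm_num
  have hh2 : (fun y => h y ^ 2) = fun y : ℝ => (1 + y^2) ^ α * (deriv g y)^2 := by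
    funext y
    rw [hh, mul_pow, sq_abs, ← Real.rpow_natCast ((1 + y^2) ^ (α/2)) 2,
      ← Real.rpow_mul (by positivity)]
    norm_num
  have hfh : ∀ y, f y * h y = |deriv g y| := by
    intro y
    rw [hf, hh, ← mul_assoc, ← Real.rpow_add (by positivity)]
    norm_num
  -- FTC bound
  have hgx : |g x| ≤ ∫ y in Ioi x, f y * h y := by
    have := aux_ftc hg hs x
    have habs : |g x| = |∫ y in Set.Ioi x, deriv g y| := by rw [this, abs_neg]
    rw [habs]
    calc |∫ y in Set.Ioi x, deriv g y| ≤ ∫ y in Set.Ioi x, |deriv g y| := by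
          simpa [Real.norm_eq_abs] using
            norm_integral_le_integral_norm (μ := volume.restrict (Set.Ioi x)) (deriv g)
      _ = ∫ y in Set.Ioi x, f y * h y := by simp_rw [hfh]
  -- Cauchy–Schwarz
  have hcs := aux_cs (f := f) (h := h) (s := Set.Ioi x)
    (fun y => (Real.rpow_pos_of_pos (by positivity) _).le)
    (fun y => mul_nonneg (Real.rpow_pos_of_pos (by positivity) _).le (abs_nonneg _))
    hfc.aestronglyMeasurable.restrict hhc.aestronglyMeasurable.restrict
    (by rw [hf2]; exact (aux_int hα).mono_set (Set.Ioi_subset_Ioi hx))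
    (by rw [hh2]; exact hIint.integrableOn)
  rw [hf2, hh2] at hcs
  have hb1 : ∫ y in Set.Ioi x, (1 + y^2) ^ (-α) ≤ K * (1 + x^2) ^ (1/2 - α) :=
    aux_bound hα hx
  have hb2 : ∫ y in Set.Ioi x, (1 + y^2) ^ α * (deriv g y)^2 ≤ I :=
    setIntegral_le_integral hIint (Eventually.of_forall (fun y => by positivity))
  -- combine
  have hA0 : 0 ≤ ∫ y in Set.Ioi x, (1 + y^2) ^ (-α) :=
    integral_nonneg (fun y => (Real.rpow_pos_of_pos (by positivity) _).le)
  have hB0 : 0 ≤ ∫ y in Set.Ioi x, (1 + y^2) ^ α * (deriv g y)^2 :=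
    integral_nonneg (fun y => by positivity)
  have hgx2 : (g x)^2 ≤ (K * (1 + x^2) ^ (1/2 - α)) * I := by
    calc (g x)^2 = |g x|^2 := (sq_abs _).symm
      _ ≤ (∫ y in Set.Ioi x, f y * h y)^2 := by
          apply pow_le_pow_left₀ (abs_nonneg _) hgx
      _ ≤ (∫ y in Set.Ioi x, (1 + y^2) ^ (-α)) * ∫ y in Set.Ioi x, (1 + y^2) ^ α * (deriv g y)^2 := hcs
      _ ≤ (K * (1 + x^2) ^ (1/2 - α)) * I := by
          apply mul_le_mul hb1 hb2 hB0
          positivity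
  have hP : (0:ℝ) < (1 + x^2) ^ (α - 1/2) := Real.rpow_pos_of_pos (by positivity) _
  have hcancel : (1 + x^2) ^ (α - 1/2) * (1 + x^2) ^ ((1:ℝ)/2 - α) = 1 := by
    rw [← Real.rpow_add (by positivity)]; norm_num
  calc (1 + x^2) ^ (α - 1/2) * (g x)^2
      ≤ (1 + x^2) ^ (α - 1/2) * ((K * (1 + x^2) ^ (1/2 - α)) * I) :=
        mul_le_mul_of_nonneg_left hgx2 hP.le
    _ = ((1 + x^2) ^ (α - 1/2) * (1 + x^2) ^ ((1:ℝ)/2 - α)) * (K * I) := by ring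
    _ = K * I := by rw [hcancel, one_mul]

theorem stmt1 (α : ℝ) (hα : 1/2 < α) :
    ∃ C > 0, ∀ g : ℝ → ℝ, ContDiff ℝ 1 g → HasCompactSupport g → ∀ x : ℝ,
      Real.sqrt (1 + x^2) ^ (2*α - 1) * (g x)^2 ≤
        C * ∫ y : ℝ, (Real.sqrt (1 + y^2) ^ α * deriv g y)^2 := by
  have h2α : (0:ℝ) < 2*α - 1 := by linarith
  refine ⟨(1 + 1/(2*α-1)) * 2 ^ (α - 1/2),
    mul_pos (by positivity) (Real.rpow_pos_of_pos two_pos _), ?_⟩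
  intro g hg hs x
  have hrhs : ∀ g' : ℝ → ℝ, (∫ y : ℝ, (Real.sqrt (1 + y^2) ^ α * deriv g' y)^2) =
      ∫ y : ℝ, (1 + y^2) ^ α * (deriv g' y)^2 := by
    intro g'
    congr 1; funext y
    rw [mul_pow, Real.sqrt_eq_rpow, ← Real.rpow_natCast (((1+y^2) ^ ((1:ℝ)/2)) ^ α) 2]
    rw [← Real.rpow_mul (by positivity), ← Real.rpow_mul (by positivity)]
    rw [show (1:ℝ)/2 * (α * ((2:ℕ):ℝ)) = α by push_cast; ring]
  have hlhs : Real.sqrt (1 + x^2) ^ (2*α - 1) = (1 + x^2) ^ (α - 1/2) := by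
    rw [Real.sqrt_eq_rpow, ← Real.rpow_mul (by positivity)]
    congr 1; ring
  rw [hrhs, hlhs]
  rcases le_or_gt 0 x with hx | hx
  · exact aux_half hα hg hs hx
  · set g₂ : ℝ → ℝ := fun y => g (-y) with hg₂
    have hg2 : ContDiff ℝ 1 g₂ := hg.comp contDiff_neg
    have hs2 : HasCompactSupport g₂ := hs.comp_homeomorph (Homeomorph.neg ℝ)
    have key := aux_half hα hg2 hs2 (x := -x) (by linarith)
    have hg2x : g₂ (-x) = g x := by rw [hg₂]; simp
    have hint : (∫ y : ℝ, (1 + y^2) ^ α * (deriv g₂ y)^2) =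
        ∫ y : ℝ, (1 + y^2) ^ α * (deriv g y)^2 := by
      have hder : ∀ y : ℝ, deriv g₂ y = -deriv g (-y) := fun y => deriv_comp_neg g y
      calc (∫ y : ℝ, (1 + y^2) ^ α * (deriv g₂ y)^2)
          = ∫ y : ℝ, (1 + (-y)^2) ^ α * (deriv g (-y))^2 := by
            congr 1; funext y; rw [hder y, neg_sq, neg_sq]
        _ = ∫ y : ℝ, (1 + y^2) ^ α * (deriv g y)^2 :=
            integral_neg_eq_self (fun y : ℝ => (1 + y^2) ^ α * (deriv g y)^2) volume
    rw [hg2x, hint, neg_sq] at key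
    exact key
end

section
/- Let α ≥ 0. There exists C > 0 such that for every compactly supported C¹ function g : ℝ → ℝ, ‖⟨·⟩^{(5/3)α} g‖_{L²}^6 ≤ C ‖⟨·⟩^{2α} g‖_{L¹}^4 ‖⟨·⟩^α g'‖_{L²}^2. -/
open MeasureTheory Real Filter

noncomputable def ww (x : ℝ) : ℝ := Real.sqrt (1 + x^2)

lemma ww_pos (x : ℝ) : 0 < ww x := Real.sqrt_pos.mpr (by positivity)

lemma ww_cont : Continuous ww := by
  unfold ww; fun_prop

lemma wwp_cont (β : ℝ) : Continuous (fun x => ww x ^ β) :=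
  ww_cont.rpow_const (fun x => Or.inl (ww_pos x).ne')

lemma wwp_nonneg (β : ℝ) (x : ℝ) : 0 ≤ ww x ^ β := Real.rpow_nonneg (ww_pos x).le _

lemma ww_mono {β x y : ℝ} (hβ : 0 ≤ β) (h : x^2 ≤ y^2) : ww x ^ β ≤ ww y ^ β :=
  Real.rpow_le_rpow (ww_pos x).le (Real.sqrt_le_sqrt (by linarith)) hβ

/-- pointwise sup bound -/
lemma key (β : ℝ) (hβ : 0 ≤ β) (g : ℝ → ℝ) (hg : ContDiff ℝ 1 g)
    (hs : HasCompactSupport g) (x : ℝ) :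
    ww x ^ β * g x ^ 2 ≤ 2 * ∫ y : ℝ, ww y ^ β * (|g y| * |deriv g y|) := by
  have hgc : Continuous g := hg.continuous
  have hg' : Continuous (deriv g) := hg.continuous_deriv le_rfl
  set F : ℝ → ℝ := fun y => 2 * (ww y ^ β * (|g y| * |deriv g y|)) with hF
  have hFc : Continuous F := by
    rw [hF]; exact continuous_const.mul ((wwp_cont β).mul (hgc.abs.mul hg'.abs))
  have hFsupp : HasCompactSupport F := by
    apply HasCompactSupport.intro hs
    intro y hy
    simp [hF, image_eq_zero_of_notMem_tsupport hy]
  have hFint : Integrable F := hFc.integrable_of_hasCompactSupport hFsupp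
  have hFnn : ∀ y, 0 ≤ F y := by
    intro y; rw [hF]
    have := wwp_nonneg β y
    positivity
  have hderiv : ∀ y : ℝ, HasDerivAt (fun z => g z ^ 2) (2 * g y * deriv g y) y := by
    intro y
    simpa [mul_comm, mul_assoc] using ((hg.differentiable one_ne_zero) y).hasDerivAt.fun_pow 2
  have hii : ∀ a b : ℝ, IntervalIntegrable (fun y => 2 * g y * deriv g y) volume a b := by
    intro a b; exact (by fun_prop : Continuous fun y => 2 * g y * deriv g y).intervalIntegrable a b
  -- main interval estimate
  have main : ∀ a b : ℝ, a ≤ b → (∀ y ∈ Set.Icc a b, ww x ^ β ≤ ww y ^ β) →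
      (g a = 0 ∨ g b = 0) → (x = a ∨ x = b) →
      ww x ^ β * g x ^ 2 ≤ 2 * ∫ y : ℝ, ww y ^ β * (|g y| * |deriv g y|) := by
    intro a b hab hw hz hx
    have hftc : ∫ y in a..b, 2 * g y * deriv g y = g b ^ 2 - g a ^ 2 :=
      intervalIntegral.integral_eq_sub_of_hasDerivAt (fun y _ => hderiv y) (hii a b)
    have h1 := le_abs_self (g b ^ 2 - g a ^ 2)
    have h2 := neg_abs_le (g b ^ 2 - g a ^ 2)
    have habsnn := abs_nonneg (g b ^ 2 - g a ^ 2)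
    have key2 : g x ^ 2 ≤ |g b ^ 2 - g a ^ 2| := by
      rcases hz with hz | hz
      · have hz2 : g a ^ 2 = 0 := by rw [hz]; ring
        rcases hx with hx | hx <;> rw [hx] <;> linarith [sq_nonneg (g a), sq_nonneg (g b)]
      · have hz2 : g b ^ 2 = 0 := by rw [hz]; ring
        rcases hx with hx | hx <;> rw [hx] <;> linarith [sq_nonneg (g a), sq_nonneg (g b)]
    have hgx : ww x ^ β * g x ^ 2 ≤ |∫ y in a..b, ww x ^ β * (2 * g y * deriv g y)| := by
      rw [intervalIntegral.integral_const_mul, hftc, abs_mul,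
        abs_of_nonneg (wwp_nonneg β x)]
      exact mul_le_mul_of_nonneg_left key2 (wwp_nonneg β x)
    have habs : |∫ y in a..b, ww x ^ β * (2 * g y * deriv g y)| ≤ ∫ y in Set.Ioc a b, F y := by
      rw [intervalIntegral.integral_of_le hab]
      calc |∫ y in Set.Ioc a b, ww x ^ β * (2 * g y * deriv g y)|
          ≤ ∫ y in Set.Ioc a b, |ww x ^ β * (2 * g y * deriv g y)| := by
            have := norm_integral_le_integral_norm (μ := volume.restrict (Set.Ioc a b))
              (fun y => ww x ^ β * (2 * g y * deriv g y))
            simp only [Real.norm_eq_abs] at this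
            exact this
        _ ≤ ∫ y in Set.Ioc a b, F y := by
            apply setIntegral_mono_on
            · exact ((continuous_const.mul ((continuous_const.mul hgc).mul hg')).abs).integrableOn_Ioc
            · exact hFint.integrableOn
            · exact measurableSet_Ioc
            · intro y hy
              have h1 : ww x ^ β ≤ ww y ^ β := hw y (Set.Ioc_subset_Icc_self hy)
              have heq : |ww x ^ β * (2 * g y * deriv g y)| =
                  (ww x ^ β) * (2 * (|g y| * |deriv g y|)) := by
                rw [abs_mul, abs_of_nonneg (wwp_nonneg β x), abs_mul, abs_mul]
                rw [abs_of_nonneg (by norm_num : (0:ℝ) ≤ 2)]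
                ring
              rw [heq, hF]
              have h2 : 0 ≤ 2 * (|g y| * |deriv g y|) := by positivity
              calc ww x ^ β * (2 * (|g y| * |deriv g y|))
                  ≤ ww y ^ β * (2 * (|g y| * |deriv g y|)) := mul_le_mul_of_nonneg_right h1 h2
                _ = 2 * (ww y ^ β * (|g y| * |deriv g y|)) := by ring
    have hall : ∫ y in Set.Ioc a b, F y ≤ ∫ y : ℝ, F y :=
      setIntegral_le_integral hFint (Filter.Eventually.of_forall hFnn)
    calc ww x ^ β * g x ^ 2 ≤ ∫ y : ℝ, F y := hgx.trans (habs.trans hall)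
      _ = 2 * ∫ y : ℝ, ww y ^ β * (|g y| * |deriv g y|) := by
        rw [hF]; exact integral_const_mul 2 _
  -- choose the interval
  rcases le_or_gt 0 x with hx0 | hx0
  · obtain ⟨R, hR⟩ := hs.bddAbove
    have hxb : x ≤ max x R + 1 := le_trans (le_max_left x R) (by linarith)
    have hgb : g (max x R + 1) = 0 := by
      apply image_eq_zero_of_notMem_tsupport
      intro hmem
      have h3 := hR hmem
      have h4 := le_max_right x R
      linarith
    exact main x (max x R + 1) hxb
      (fun y hy => ww_mono hβ (by nlinarith [hy.1, hy.2])) (Or.inr hgb) (Or.inl rfl)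
  · obtain ⟨L, hL⟩ := hs.bddBelow
    have hax : min x L - 1 ≤ x := le_trans (by linarith [min_le_left x L]) le_rfl
    have hga : g (min x L - 1) = 0 := by
      apply image_eq_zero_of_notMem_tsupport
      intro hmem
      have h3 := hL hmem
      have h4 := min_le_right x L
      linarith
    exact main (min x L - 1) x hax
      (fun y hy => ww_mono hβ (by nlinarith [hy.1, hy.2])) (Or.inl hga) (Or.inr rfl)

theorem stmt2 (α : ℝ) (hα : 0 ≤ α) :
    ∃ C > 0, ∀ g : ℝ → ℝ, ContDiff ℝ 1 g → HasCompactSupport g →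
      (∫ x : ℝ, (Real.sqrt (1 + x^2) ^ ((5/3)*α) * g x)^2)^3 ≤
        C * (∫ x : ℝ, Real.sqrt (1 + x^2) ^ (2*α) * |g x|)^4 *
          (∫ x : ℝ, (Real.sqrt (1 + x^2) ^ α * deriv g x)^2) := by
  refine ⟨4, by norm_num, ?_⟩
  intro g hg hs
  have hgc : Continuous g := hg.continuous
  have hg' : Continuous (deriv g) := hg.continuous_deriv le_rfl
  have hww : ∀ x : ℝ, Real.sqrt (1 + x^2) = ww x := fun _ => rfl
  simp only [hww]
  set I := ∫ x : ℝ, (ww x ^ ((5/3)*α) * g x)^2 with hI_def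
  set M := ∫ x : ℝ, ww x ^ (2*α) * |g x| with hM_def
  set D2 := ∫ x : ℝ, (ww x ^ α * deriv g x)^2 with hD2_def
  set J := ∫ y : ℝ, ww y ^ ((8/3)*α) * (|g y| * |deriv g y|) with hJ_def
  have hderiv0 : ∀ x ∉ tsupport g, deriv g x = 0 := by
    intro x hx
    by_contra h
    exact hx (support_deriv_subset (by simpa [Function.mem_support] using h))
  have hcs : ∀ f : ℝ → ℝ, Continuous f → (∀ x ∉ tsupport g, f x = 0) → Integrable f :=
    fun f hf h0 => hf.integrable_of_hasCompactSupport (HasCompactSupport.intro hs h0)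
  have intI : Integrable (fun x => (ww x ^ ((5/3)*α) * g x)^2) := by
    apply hcs _ (((wwp_cont ((5/3)*α)).mul hgc).pow 2)
    intro x hx; simp [image_eq_zero_of_notMem_tsupport hx]
  have intM : Integrable (fun x => ww x ^ (2*α) * |g x|) := by
    apply hcs _ ((wwp_cont (2*α)).mul hgc.abs)
    intro x hx; simp [image_eq_zero_of_notMem_tsupport hx]
  have hI : 0 ≤ I := integral_nonneg fun x => sq_nonneg _
  have hM : 0 ≤ M := integral_nonneg fun x => mul_nonneg (wwp_nonneg _ x) (abs_nonneg _)
  have hD2 : 0 ≤ D2 := integral_nonneg fun x => sq_nonneg _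
  have hJ : 0 ≤ J :=
    integral_nonneg fun x => mul_nonneg (wwp_nonneg _ x)
      (mul_nonneg (abs_nonneg _) (abs_nonneg _))
  -- Step A : I ≤ M * sqrt (2*J)
  have hptA : ∀ x : ℝ, (ww x ^ ((5/3)*α) * g x)^2 ≤
      (ww x ^ (2*α) * |g x|) * Real.sqrt (2*J) := by
    intro x
    have h5 : ww x ^ ((5/3)*α) * ww x ^ ((5/3)*α) = ww x ^ (2*α) * ww x ^ ((4/3)*α) := by
      rw [← Real.rpow_add (ww_pos x), ← Real.rpow_add (ww_pos x)]; ring_nf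
    have e1 : (ww x ^ ((5/3)*α) * g x)^2 =
        (ww x ^ (2*α) * |g x|) * (ww x ^ ((4/3)*α) * |g x|) := by
      calc (ww x ^ ((5/3)*α) * g x)^2
          = (ww x ^ ((5/3)*α) * ww x ^ ((5/3)*α)) * (|g x| * |g x|) := by
            rw [abs_mul_abs_self]; ring
        _ = (ww x ^ (2*α) * |g x|) * (ww x ^ ((4/3)*α) * |g x|) := by rw [h5]; ring
    have e2 : ww x ^ ((4/3)*α) * |g x| ≤ Real.sqrt (2*J) := by
      have h43 : ww x ^ ((4/3)*α) * ww x ^ ((4/3)*α) = ww x ^ ((8/3)*α) := by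
        rw [← Real.rpow_add (ww_pos x)]; ring_nf
      have hsq : (ww x ^ ((4/3)*α) * |g x|)^2 ≤ 2*J := by
        have e3 : (ww x ^ ((4/3)*α) * |g x|)^2 = ww x ^ ((8/3)*α) * g x ^ 2 := by
          calc (ww x ^ ((4/3)*α) * |g x|)^2
              = (ww x ^ ((4/3)*α) * ww x ^ ((4/3)*α)) * (|g x| * |g x|) := by ring
            _ = ww x ^ ((8/3)*α) * g x ^ 2 := by rw [h43, abs_mul_abs_self]; ring
        rw [e3]
        exact key ((8/3)*α) (by positivity) g hg hs x
      calc ww x ^ ((4/3)*α) * |g x|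
          = Real.sqrt ((ww x ^ ((4/3)*α) * |g x|)^2) := by
            rw [Real.sqrt_sq (mul_nonneg (wwp_nonneg _ x) (abs_nonneg _))]
        _ ≤ Real.sqrt (2*J) := Real.sqrt_le_sqrt hsq
    rw [e1]
    exact mul_le_mul_of_nonneg_left e2 (mul_nonneg (wwp_nonneg _ x) (abs_nonneg _))
  have hIA : I ≤ M * Real.sqrt (2*J) := by
    have h := integral_mono intI (intM.mul_const (Real.sqrt (2*J))) hptA
    rwa [integral_mul_const] at h
  -- Step B : J ≤ sqrt I * sqrt D2
  have hB : J ≤ Real.sqrt I * Real.sqrt D2 := by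
    set f1 : ℝ → ℝ := fun y => ww y ^ ((5/3)*α) * |g y| with hf1
    set f2 : ℝ → ℝ := fun y => ww y ^ α * |deriv g y| with hf2
    have hf1c : Continuous f1 := (wwp_cont _).mul hgc.abs
    have hf2c : Continuous f2 := (wwp_cont _).mul hg'.abs
    have hf1s : HasCompactSupport f1 := HasCompactSupport.intro hs
      (fun x hx => by simp [hf1, image_eq_zero_of_notMem_tsupport hx])
    have hf2s : HasCompactSupport f2 := HasCompactSupport.intro hs
      (fun x hx => by simp [hf2, hderiv0 x hx])
    have hconj : Real.HolderConjugate 2 2 := Real.HolderConjugate.two_two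
    have hCS := integral_mul_le_Lp_mul_Lq_of_nonneg (μ := volume) hconj
      (Filter.Eventually.of_forall fun y : ℝ =>
        mul_nonneg (wwp_nonneg _ y) (abs_nonneg _) :
          (0 : ℝ → ℝ) ≤ᵐ[volume] f1)
      (Filter.Eventually.of_forall fun y : ℝ =>
        mul_nonneg (wwp_nonneg _ y) (abs_nonneg _) :
          (0 : ℝ → ℝ) ≤ᵐ[volume] f2)
      (hf1c.memLp_of_hasCompactSupport hf1s)
      (hf2c.memLp_of_hasCompactSupport hf2s)
    have eJ : ∫ y : ℝ, f1 y * f2 y = J := by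
      apply integral_congr_ae
      filter_upwards with y
      rw [hf1, hf2]
      show ww y ^ ((5/3)*α) * |g y| * (ww y ^ α * |deriv g y|) = _
      rw [show ww y ^ ((5/3)*α) * |g y| * (ww y ^ α * |deriv g y|)
          = (ww y ^ ((5/3)*α) * ww y ^ α) * (|g y| * |deriv g y|) by ring,
        ← Real.rpow_add (ww_pos y)]
      ring_nf
    have eI : ∫ y : ℝ, f1 y ^ (2:ℝ) = I := by
      apply integral_congr_ae
      filter_upwards with y
      rw [hf1]
      show (ww y ^ ((5/3)*α) * |g y|) ^ (2:ℝ) = _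
      rw [Real.rpow_two]
      calc (ww y ^ ((5/3)*α) * |g y|)^2 = (ww y ^ ((5/3)*α))^2 * |g y|^2 := by ring
        _ = (ww y ^ ((5/3)*α) * g y)^2 := by rw [sq_abs]; ring
    have eD : ∫ y : ℝ, f2 y ^ (2:ℝ) = D2 := by
      apply integral_congr_ae
      filter_upwards with y
      rw [hf2]
      show (ww y ^ α * |deriv g y|) ^ (2:ℝ) = _
      rw [Real.rpow_two]
      calc (ww y ^ α * |deriv g y|)^2 = (ww y ^ α)^2 * |deriv g y|^2 := by ring
        _ = (ww y ^ α * deriv g y)^2 := by rw [sq_abs]; ring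
    rw [eJ, eI, eD] at hCS
    calc J ≤ I ^ ((1:ℝ)/2) * D2 ^ ((1:ℝ)/2) := hCS
      _ = Real.sqrt I * Real.sqrt D2 := by
        rw [Real.sqrt_eq_rpow, Real.sqrt_eq_rpow]
  -- algebra
  have h1 : I^2 ≤ M^2 * (2*J) := by
    nlinarith [mul_self_le_mul_self hI hIA, Real.sq_sqrt (show (0:ℝ) ≤ 2*J by positivity),
      Real.sqrt_nonneg (2*J)]
  have h2 : J^2 ≤ I * D2 := by
    nlinarith [mul_self_le_mul_self hJ hB, Real.sq_sqrt hI, Real.sq_sqrt hD2,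
      Real.sqrt_nonneg I, Real.sqrt_nonneg D2]
  have h4 : I^4 ≤ 4*M^4*(I*D2) := by nlinarith [sq_nonneg M, sq_nonneg (M^2), hJ, hI]
  rcases eq_or_lt_of_le hI with hI0 | hI0
  · rw [← hI0]
    norm_num
    positivity
  · have : I^3 * I ≤ (4*M^4*D2) * I := by nlinarith
    exact le_of_mul_le_mul_right this hI0
end

section
/- Let α ≥ 0 and suppose that for all compactly supported C¹ functions g : ℝ → ℝ one has the two inequalities ‖⟨·⟩^{(5/3)α} g‖_{L²}^6 ≤ C₁ ‖⟨·⟩^{2α} g‖_{L¹}^4 ‖⟨·⟩^α g'‖_{L²}^2 and ‖⟨·⟩^{(4/3)α} g‖_{L^∞}^6 ≤ C₂ ‖⟨·⟩^{2α} g‖_{L¹}^2 ‖⟨·⟩^α g'‖_{L²}^4. Then for 0 ≤ α ≤ 1/2 there is a constant C > 0 such that for every such g, ‖g‖_{L²}^{2 + 4/(1+2α)} ≤ C ‖⟨·⟩^{2α} g‖_{L¹}^{4/(1+2α)} ‖⟨·⟩^α g'‖_{L²}^2. -/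
open MeasureTheory Real Filter

set_option maxHeartbeats 1000000

private lemma le_cbrt {u Y : ℝ} (hu : 0 ≤ u) (h : u^3 ≤ Y) : u ≤ Y ^ ((1:ℝ)/3) := by
  have hY : 0 ≤ Y := le_trans (by positivity) h
  calc u = (u^3) ^ ((1:ℝ)/3) := by
        rw [← Real.rpow_natCast u 3, ← Real.rpow_mul hu]; norm_num
    _ ≤ Y ^ ((1:ℝ)/3) := Real.rpow_le_rpow (by positivity) h (by norm_num)

private noncomputable def cbig (α C₁' C₂' : ℝ) : ℝ :=
  ((9-10*α)/(5*(3+2*α)))*(Real.log C₁'/3) + (1-(9-10*α)/(5*(3+2*α)))*(2*Real.log 2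
    + 3*((Real.log C₁'-Real.log C₂')/3 - Real.log 2)/(3+10*α) + Real.log C₂'/3)

private lemma combine (α C₁' C₂' X L D : ℝ) (hα0 : 0 ≤ α) (hα2 : α ≤ 1/2)
    (hC₁1 : 1 ≤ C₁') (hC₂1 : 1 ≤ C₂') (hX0 : 0 ≤ X) (hL0 : 0 ≤ L) (hD0 : 0 ≤ D)
    (hX3 : X^3 ≤ C₁' * L^4 * D)
    (hsplit : ∀ R : ℝ, 0 < R →
      X ≤ 2*R*(C₂' * L^2 * D^2) ^ ((1:ℝ)/3) + R ^ (-(10/3*α)) * (C₁' * L^4 * D) ^ ((1:ℝ)/3)) :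
    X ^ (1 + 2/(1+2*α)) ≤ Real.exp ((1 + 2/(1+2*α)) * cbig α C₁' C₂') * L ^ (4/(1+2*α)) * D := by
  have h3 : (0:ℝ) < 3 + 2*α := by linarith
  have h10 : (0:ℝ) < 3 + 10*α := by linarith
  have h12 : (0:ℝ) < 1 + 2*α := by linarith
  have hC₁p : (0:ℝ) < C₁' := lt_of_lt_of_le one_pos hC₁1
  have hC₂p : (0:ℝ) < C₂' := lt_of_lt_of_le one_pos hC₂1
  set c₁ := Real.log C₁' with hc₁def
  set c₂ := Real.log C₂' with hc₂def
  set θ := (9-10*α)/(5*(3+2*α)) with hθdef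
  have hθ0 : 0 ≤ θ := div_nonneg (by linarith) (by linarith)
  have hθ1 : θ ≤ 1 := by rw [div_le_one (by linarith)]; linarith
  have hc₀def : cbig α C₁' C₂' = θ*(c₁/3) + (1-θ)*(2*Real.log 2
      + 3*((c₁-c₂)/3 - Real.log 2)/(3+10*α) + c₂/3) := rfl
  set c₀ := cbig α C₁' C₂'
  have hE0 : (0:ℝ) ≤ 1 + 2/(1+2*α) := by
    have : 0 < 2/(1+2*α) := by positivity
    linarith
  rcases eq_or_lt_of_le hX0 with hXz | hXpos
  · rw [← hXz, Real.zero_rpow]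
    · exact mul_nonneg (mul_nonneg (Real.exp_pos _).le (Real.rpow_nonneg hL0 _)) hD0
    · have hq : (0:ℝ) < 2/(1+2*α) := div_pos (by norm_num) h12
      exact ne_of_gt (by linarith)
  have hLpos : 0 < L := by
    rcases eq_or_lt_of_le hL0 with h | h
    · exfalso; rw [← h] at hX3; simp at hX3; nlinarith [pow_pos hXpos 3]
    · exact h
  have hDpos : 0 < D := by
    rcases eq_or_lt_of_le hD0 with h | h
    · exfalso; rw [← h] at hX3; simp at hX3; nlinarith [pow_pos hXpos 3]
    · exact h
  set l := Real.log L with hldef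
  set d := Real.log D with hddef
  set xx := Real.log X with hxxdef
  -- B1 in log form
  have hB1 : 3*xx ≤ c₁ + 4*l + d := by
    have hlog := Real.log_le_log (show (0:ℝ) < X^3 by positivity) hX3
    rw [Real.log_pow, Real.log_mul (show C₁' * L^4 ≠ 0 by positivity) (ne_of_gt hDpos),
      Real.log_mul (ne_of_gt hC₁p) (show L^4 ≠ 0 by positivity), Real.log_pow] at hlog
    push_cast at hlog
    linarith
  -- B2 in log form, with optimal R
  set ρ := ((c₁ + 4*l + d)/3 - (c₂ + 2*l + 2*d)/3 - Real.log 2) * 3 / (3+10*α) with hρdef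
  have hB2 : xx ≤ 2*Real.log 2 + ρ + (c₂ + 2*l + 2*d)/3 := by
    have hsp := hsplit (Real.exp ρ) (Real.exp_pos ρ)
    have hk₂ : (C₂' * L^2 * D^2) ^ ((1:ℝ)/3) = Real.exp ((c₂ + 2*l + 2*d)/3) := by
      rw [Real.rpow_def_of_pos (show (0:ℝ) < C₂' * L^2 * D^2 by positivity) ((1:ℝ)/3),
        Real.log_mul (show C₂' * L^2 ≠ 0 by positivity) (show D^2 ≠ 0 by positivity),
        Real.log_mul (ne_of_gt hC₂p) (show L^2 ≠ 0 by positivity), Real.log_pow, Real.log_pow]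
      push_cast; ring_nf; rfl
    have hk₁ : (C₁' * L^4 * D) ^ ((1:ℝ)/3) = Real.exp ((c₁ + 4*l + d)/3) := by
      rw [Real.rpow_def_of_pos (show (0:ℝ) < C₁' * L^4 * D by positivity) ((1:ℝ)/3),
        Real.log_mul (show C₁' * L^4 ≠ 0 by positivity) (ne_of_gt hDpos),
        Real.log_mul (ne_of_gt hC₁p) (show L^4 ≠ 0 by positivity), Real.log_pow]
      push_cast; ring_nf; rfl
    have ht1 : 2*Real.exp ρ*(C₂' * L^2 * D^2) ^ ((1:ℝ)/3)
        = Real.exp (Real.log 2 + ρ + (c₂ + 2*l + 2*d)/3) := by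
      rw [hk₂, Real.exp_add, Real.exp_add, Real.exp_log two_pos]; try ring
    have ht2 : (Real.exp ρ) ^ (-(10/3*α)) * (C₁' * L^4 * D) ^ ((1:ℝ)/3)
        = Real.exp (ρ * (-(10/3*α)) + (c₁ + 4*l + d)/3) := by
      rw [hk₁, Real.rpow_def_of_pos (Real.exp_pos _), Real.log_exp, ← Real.exp_add]
    have hexps : ρ * (-(10/3*α)) + (c₁ + 4*l + d)/3
        = Real.log 2 + ρ + (c₂ + 2*l + 2*d)/3 := by
      have hρmul : ρ * (3+10*α) = ((c₁ + 4*l + d)/3 - (c₂ + 2*l + 2*d)/3 - Real.log 2) * 3 := by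
        rw [hρdef]; field_simp
      nlinarith [hρmul]
    rw [ht1, ht2, hexps] at hsp
    have hXle : X ≤ 2 * Real.exp (Real.log 2 + ρ + (c₂ + 2*l + 2*d)/3) := by linarith
    have hlog2 := Real.log_le_log hXpos hXle
    rw [Real.log_mul (by norm_num) (ne_of_gt (Real.exp_pos _)), Real.log_exp] at hlog2
    linarith
  -- combine
  have hfin : xx ≤ c₀ + (4/(3+2*α))*l + ((1+2*α)/(3+2*α))*d := by
    have e1 : xx ≤ c₁/3 + (4/3)*l + (1/3)*d := by linarith
    calc xx = θ*xx + (1-θ)*xx := by ring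
      _ ≤ θ*(c₁/3 + (4/3)*l + (1/3)*d) + (1-θ)*(2*Real.log 2 + ρ + (c₂ + 2*l + 2*d)/3) :=
          add_le_add (mul_le_mul_of_nonneg_left e1 hθ0)
            (mul_le_mul_of_nonneg_left hB2 (by linarith))
      _ = c₀ + (4/(3+2*α))*l + ((1+2*α)/(3+2*α))*d := by
          rw [hc₀def, hρdef, hθdef]
          field_simp
          ring
  have hXle2 : X ≤ Real.exp c₀ * L ^ (4/(3+2*α)) * D ^ ((1+2*α)/(3+2*α)) := by
    have hmono := Real.exp_le_exp.2 hfin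
    rw [Real.exp_log hXpos] at hmono
    rw [Real.exp_add, Real.exp_add] at hmono
    rw [Real.rpow_def_of_pos hLpos, Real.rpow_def_of_pos hDpos]
    calc X ≤ Real.exp c₀ * Real.exp ((4/(3+2*α))*l) * Real.exp (((1+2*α)/(3+2*α))*d) := hmono
      _ = Real.exp c₀ * Real.exp (Real.log L * (4/(3+2*α)))
          * Real.exp (Real.log D * ((1+2*α)/(3+2*α))) := by
          rw [hldef, hddef]; ring_nf
  -- final rpow manipulation
  have hrhs0 : 0 ≤ Real.exp c₀ * L ^ (4/(3+2*α)) :=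
    mul_nonneg (Real.exp_pos _).le (Real.rpow_nonneg hL0 _)
  calc X ^ (1 + 2/(1+2*α))
      ≤ (Real.exp c₀ * L ^ (4/(3+2*α)) * D ^ ((1+2*α)/(3+2*α))) ^ (1 + 2/(1+2*α)) :=
        Real.rpow_le_rpow hX0 hXle2 hE0
    _ = (Real.exp c₀) ^ (1 + 2/(1+2*α)) * (L ^ (4/(3+2*α))) ^ (1 + 2/(1+2*α))
        * (D ^ ((1+2*α)/(3+2*α))) ^ (1 + 2/(1+2*α)) := by
        rw [Real.mul_rpow hrhs0 (Real.rpow_nonneg hD0 _),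
          Real.mul_rpow (Real.exp_pos _).le (Real.rpow_nonneg hL0 _)]
    _ = Real.exp ((1 + 2/(1+2*α)) * c₀) * L ^ (4/(1+2*α)) * D := by
        rw [← Real.rpow_mul hL0, ← Real.rpow_mul hD0]
        rw [show (4/(3+2*α)) * (1 + 2/(1+2*α)) = 4/(1+2*α) by field_simp; ring]
        rw [show ((1+2*α)/(3+2*α)) * (1 + 2/(1+2*α)) = 1 by field_simp; ring]
        rw [Real.rpow_one]
        rw [Real.rpow_def_of_pos (Real.exp_pos _), Real.log_exp]
        ring_nf

theorem stmt4 (α : ℝ) (hα0 : 0 ≤ α) (hα2 : α ≤ 1/2) (C₁ C₂ : ℝ)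
    (h1 : ∀ g : ℝ → ℝ, ContDiff ℝ 1 g → HasCompactSupport g →
      (∫ x : ℝ, (Real.sqrt (1 + x^2) ^ ((5/3)*α) * g x)^2)^3 ≤
        C₁ * (∫ x : ℝ, Real.sqrt (1 + x^2) ^ (2*α) * |g x|)^4 *
          (∫ x : ℝ, (Real.sqrt (1 + x^2) ^ α * deriv g x)^2))
    (h2 : ∀ g : ℝ → ℝ, ContDiff ℝ 1 g → HasCompactSupport g → ∀ x : ℝ,
      (Real.sqrt (1 + x^2) ^ ((4/3)*α) * |g x|)^6 ≤
        C₂ * (∫ y : ℝ, Real.sqrt (1 + y^2) ^ (2*α) * |g y|)^2 *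
          (∫ y : ℝ, (Real.sqrt (1 + y^2) ^ α * deriv g y)^2)^2) :
    ∃ C > 0, ∀ g : ℝ → ℝ, ContDiff ℝ 1 g → HasCompactSupport g →
      (∫ x : ℝ, (g x)^2) ^ (1 + 2/(1+2*α)) ≤
        C * (∫ x : ℝ, Real.sqrt (1 + x^2) ^ (2*α) * |g x|) ^ (4/(1+2*α)) *
          (∫ x : ℝ, (Real.sqrt (1 + x^2) ^ α * deriv g x)^2) := by
  refine ⟨Real.exp ((1 + 2/(1+2*α)) * cbig α (max C₁ 1) (max C₂ 1)), Real.exp_pos _, ?_⟩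
  intro g hg hc
  have hC₁1 : (1:ℝ) ≤ max C₁ 1 := le_max_right _ _
  have hC₂1 : (1:ℝ) ≤ max C₂ 1 := le_max_right _ _
  -- basic facts about the weight
  have hWc : Continuous fun x : ℝ => Real.sqrt (1 + x^2) :=
    Real.continuous_sqrt.comp (by continuity)
  have hW1 : ∀ x : ℝ, 1 ≤ Real.sqrt (1 + x^2) := fun x =>
    Real.one_le_sqrt.2 (by nlinarith [sq_nonneg x])
  have hWpos : ∀ x : ℝ, 0 < Real.sqrt (1 + x^2) := fun x => lt_of_lt_of_le one_pos (hW1 x)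
  have hWrc : ∀ β : ℝ, Continuous fun x : ℝ => Real.sqrt (1 + x^2) ^ β := fun β =>
    hWc.rpow_const fun x => Or.inl (ne_of_gt (hWpos x))
  have hWr1 : ∀ (β : ℝ), 0 ≤ β → ∀ x : ℝ, 1 ≤ Real.sqrt (1 + x^2) ^ β := fun β hβ x =>
    Real.one_le_rpow (hW1 x) hβ
  -- continuity and supports
  have gc : Continuous g := hg.continuous
  have iX : Integrable (fun x : ℝ => (g x)^2) :=
    (gc.pow 2).integrable_of_hasCompactSupport (hc.comp_left (g := fun t : ℝ => t^2) (by norm_num) : HasCompactSupport fun x : ℝ => (g x)^2)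
  have iA : Integrable (fun x : ℝ => (Real.sqrt (1 + x^2) ^ ((5/3)*α) * g x)^2) := by
    apply Continuous.integrable_of_hasCompactSupport (((hWrc _).mul gc).pow 2)
    have h1s : HasCompactSupport (fun x : ℝ => Real.sqrt (1 + x^2) ^ ((5/3)*α) * g x) :=
      hc.mul_left
    exact h1s.comp_left (g := fun t : ℝ => t^2) (by norm_num)
  -- nonnegativity
  have hX0 : 0 ≤ ∫ x : ℝ, (g x)^2 := integral_nonneg fun x => sq_nonneg _
  have hA0 : 0 ≤ ∫ x : ℝ, (Real.sqrt (1 + x^2) ^ ((5/3)*α) * g x)^2 :=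
    integral_nonneg fun x => sq_nonneg _
  have hL0 : 0 ≤ ∫ x : ℝ, Real.sqrt (1 + x^2) ^ (2*α) * |g x| :=
    integral_nonneg fun x => mul_nonneg (Real.rpow_nonneg (Real.sqrt_nonneg _) _) (abs_nonneg _)
  have hD0 : 0 ≤ ∫ x : ℝ, (Real.sqrt (1 + x^2) ^ α * deriv g x)^2 :=
    integral_nonneg fun x => sq_nonneg _
  have hLD0 : 0 ≤ (∫ x : ℝ, Real.sqrt (1 + x^2) ^ (2*α) * |g x|)^4
      * ∫ x : ℝ, (Real.sqrt (1 + x^2) ^ α * deriv g x)^2 :=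
    mul_nonneg (pow_nonneg hL0 4) hD0
  have hLD0' : 0 ≤ (∫ x : ℝ, Real.sqrt (1 + x^2) ^ (2*α) * |g x|)^2
      * (∫ x : ℝ, (Real.sqrt (1 + x^2) ^ α * deriv g x)^2)^2 :=
    mul_nonneg (pow_nonneg hL0 2) (pow_nonneg hD0 2)
  -- B1
  have hXA : (∫ x : ℝ, (g x)^2) ≤ ∫ x : ℝ, (Real.sqrt (1 + x^2) ^ ((5/3)*α) * g x)^2 := by
    apply integral_mono iX iA
    intro x
    have h1x := hWr1 ((5/3)*α) (by linarith) x
    simp only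
    nlinarith [mul_nonneg (mul_nonneg (sub_nonneg.2 h1x)
      (show (0:ℝ) ≤ Real.sqrt (1 + x^2) ^ ((5/3)*α) + 1 by linarith)) (sq_nonneg (g x))]
  have hA3 : (∫ x : ℝ, (Real.sqrt (1 + x^2) ^ ((5/3)*α) * g x)^2)^3 ≤
      max C₁ 1 * (∫ x : ℝ, Real.sqrt (1 + x^2) ^ (2*α) * |g x|)^4
        * ∫ x : ℝ, (Real.sqrt (1 + x^2) ^ α * deriv g x)^2 := by
    have hbase := h1 g hg hc
    nlinarith [mul_nonneg (sub_nonneg.2 (le_max_left C₁ 1)) hLD0]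
  have hX3 : (∫ x : ℝ, (g x)^2)^3 ≤
      max C₁ 1 * (∫ x : ℝ, Real.sqrt (1 + x^2) ^ (2*α) * |g x|)^4
        * ∫ x : ℝ, (Real.sqrt (1 + x^2) ^ α * deriv g x)^2 :=
    le_trans (pow_le_pow_left₀ hX0 hXA 3) hA3
  -- pointwise sup bound
  have hpt : ∀ x : ℝ, (g x)^2 ≤ (max C₂ 1 * (∫ x : ℝ, Real.sqrt (1 + x^2) ^ (2*α) * |g x|)^2
      * (∫ x : ℝ, (Real.sqrt (1 + x^2) ^ α * deriv g x)^2)^2) ^ ((1:ℝ)/3) := by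
    intro x
    have hbase := h2 g hg hc x
    have h1x := hWr1 ((4/3)*α) (by linarith) x
    have habs : |g x| ≤ Real.sqrt (1 + x^2) ^ ((4/3)*α) * |g x| :=
      le_mul_of_one_le_left (abs_nonneg _) h1x
    have h6 := le_trans (pow_le_pow_left₀ (abs_nonneg _) habs 6) hbase
    have e1 : ((g x)^2)^3 = |g x|^6 := by
      rw [← abs_pow, abs_of_nonneg (show (0:ℝ) ≤ g x ^ 6 by positivity)]; ring
    refine le_cbrt (sq_nonneg _) ?_
    rw [e1]
    nlinarith [mul_nonneg (sub_nonneg.2 (le_max_left C₂ 1)) hLD0']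
  -- splitting bound
  have hsplit : ∀ R : ℝ, 0 < R →
      (∫ x : ℝ, (g x)^2) ≤ 2*R*(max C₂ 1 * (∫ x : ℝ, Real.sqrt (1 + x^2) ^ (2*α) * |g x|)^2
          * (∫ x : ℝ, (Real.sqrt (1 + x^2) ^ α * deriv g x)^2)^2) ^ ((1:ℝ)/3)
        + R ^ (-(10/3*α)) * (max C₁ 1 * (∫ x : ℝ, Real.sqrt (1 + x^2) ^ (2*α) * |g x|)^4
          * ∫ x : ℝ, (Real.sqrt (1 + x^2) ^ α * deriv g x)^2) ^ ((1:ℝ)/3) := by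
    intro R hR
    set K₂ := (max C₂ 1 * (∫ x : ℝ, Real.sqrt (1 + x^2) ^ (2*α) * |g x|)^2
      * (∫ x : ℝ, (Real.sqrt (1 + x^2) ^ α * deriv g x)^2)^2) ^ ((1:ℝ)/3) with hK₂def
    set K₁ := (max C₁ 1 * (∫ x : ℝ, Real.sqrt (1 + x^2) ^ (2*α) * |g x|)^4
      * ∫ x : ℝ, (Real.sqrt (1 + x^2) ^ α * deriv g x)^2) ^ ((1:ℝ)/3) with hK₁def
    have hs : MeasurableSet (Set.Icc (-R) R) := measurableSet_Icc
    have hkey := (integral_add_compl hs iX).symm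
    have hfirst : ∫ x in Set.Icc (-R) R, (g x)^2 ≤ 2*R*K₂ := by
      have hconst : IntegrableOn (fun _ : ℝ => K₂) (Set.Icc (-R) R) := by
        refine (integrableOn_const_iff (by finiteness)).2 (Or.inr ?_)
        rw [Real.volume_Icc]; exact ENNReal.ofReal_lt_top
      calc ∫ x in Set.Icc (-R) R, (g x)^2
          ≤ ∫ _x in Set.Icc (-R) R, K₂ :=
            setIntegral_mono_on iX.integrableOn hconst hs (fun x _ => hpt x)
        _ = (volume (Set.Icc (-R) R)).toReal * K₂ := by
            rw [setIntegral_const, smul_eq_mul, measureReal_def]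
        _ = 2*R*K₂ := by
            rw [Real.volume_Icc, ENNReal.toReal_ofReal (by linarith)]; ring_nf
    have hsecond : ∫ x in (Set.Icc (-R) R)ᶜ, (g x)^2 ≤ R ^ (-(10/3*α)) * K₁ := by
      have hptc : ∀ x ∈ (Set.Icc (-R) R)ᶜ,
          (g x)^2 ≤ R ^ (-(10/3*α)) * (Real.sqrt (1 + x^2) ^ ((5/3)*α) * g x)^2 := by
        intro x hx
        have hxx : R^2 ≤ x^2 := by
          simp only [Set.mem_compl_iff, Set.mem_Icc, not_and_or, not_le] at hx
          rcases hx with h | h <;> nlinarith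
        have hRw : R ≤ Real.sqrt (1 + x^2) := by
          rw [show R = Real.sqrt (R^2) from (Real.sqrt_sq hR.le).symm]
          exact Real.sqrt_le_sqrt (by linarith)
        have hwr : R ^ (10/3*α) ≤ Real.sqrt (1 + x^2) ^ (10/3*α) :=
          Real.rpow_le_rpow hR.le hRw (by linarith)
        have hone : (1:ℝ) ≤ R ^ (-(10/3*α)) * Real.sqrt (1 + x^2) ^ (10/3*α) := by
          have hrr : R ^ (-(10/3*α)) * R ^ (10/3*α) = 1 := by
            rw [← Real.rpow_add hR]; norm_num
          calc (1:ℝ) = R ^ (-(10/3*α)) * R ^ (10/3*α) := hrr.symm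
            _ ≤ R ^ (-(10/3*α)) * Real.sqrt (1 + x^2) ^ (10/3*α) :=
                mul_le_mul_of_nonneg_left hwr (Real.rpow_nonneg hR.le _)
        have hexpand : (Real.sqrt (1 + x^2) ^ ((5/3)*α) * g x)^2
            = Real.sqrt (1 + x^2) ^ (10/3*α) * (g x)^2 := by
          rw [mul_pow, ← Real.rpow_natCast (Real.sqrt (1 + x^2) ^ ((5/3)*α)) 2,
            ← Real.rpow_mul (Real.sqrt_nonneg _),
            show (5/3*α) * ((2:ℕ):ℝ) = 10/3*α by push_cast; ring]
        rw [hexpand, ← mul_assoc]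
        exact le_mul_of_one_le_left (sq_nonneg _) hone
      calc ∫ x in (Set.Icc (-R) R)ᶜ, (g x)^2
          ≤ ∫ x in (Set.Icc (-R) R)ᶜ,
              R ^ (-(10/3*α)) * (Real.sqrt (1 + x^2) ^ ((5/3)*α) * g x)^2 :=
            setIntegral_mono_on iX.integrableOn ((iA.const_mul _).integrableOn) hs.compl hptc
        _ = R ^ (-(10/3*α)) * ∫ x in (Set.Icc (-R) R)ᶜ,
              (Real.sqrt (1 + x^2) ^ ((5/3)*α) * g x)^2 := integral_const_mul _ _
        _ ≤ R ^ (-(10/3*α)) * ∫ x : ℝ, (Real.sqrt (1 + x^2) ^ ((5/3)*α) * g x)^2 := by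
            apply mul_le_mul_of_nonneg_left _ (Real.rpow_nonneg hR.le _)
            exact setIntegral_le_integral iA (Eventually.of_forall fun x => sq_nonneg _)
        _ ≤ R ^ (-(10/3*α)) * K₁ :=
            mul_le_mul_of_nonneg_left (le_cbrt hA0 hA3) (Real.rpow_nonneg hR.le _)
    linarith [hkey, hfirst, hsecond]
  exact combine α (max C₁ 1) (max C₂ 1) _ _ _ hα0 hα2 hC₁1 hC₂1 hX0 hL0 hD0 hX3 hsplit
end

section
/- Let α ∈ (−1/2, 1/2) and let ψ : ℝ → ℝ be a positive continuous function with ψ₁⟨x⟩^α ≤ ψ(x) ≤ ψ₂⟨x⟩^α for constants ψ₁, ψ₂ > 0. Define H(x) = ∫₀^x ψ(y)^{−2} dy. Then H is a strictly increasing bijection of ℝ onto ℝ, |H(x)| → ∞ as |x| → ∞, and there exist constants c₁, c₂ > 0 such that c₁⟨x⟩² ≤ ⟨H(x)⟩^{2−β} ≤ c₂⟨x⟩² for all x ∈ ℝ, where β = −4α/(1−2α). -/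
open MeasureTheory Real Filter

lemma aux_spos (x : ℝ) : (0:ℝ) < 1 + x^2 := by positivity

lemma aux_rpow_eq (α x : ℝ) : (1+x^2:ℝ) ^ (-α) = (1+x^2:ℝ) ^ (-α-1) * (1+x^2) := by
  rw [← Real.rpow_add_one (aux_spos x).ne' (-α-1)]
  ring_nf

lemma aux_deriv (α x : ℝ) :
    HasDerivAt (fun x : ℝ => x * (1+x^2) ^ (-α))
      ((1+x^2:ℝ) ^ (-α-1) * (1+(1-2*α)*x^2)) x := by
  have h1 : HasDerivAt (fun x : ℝ => 1 + x^2) (2*x) x := by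
    simpa using ((hasDerivAt_pow 2 x).const_add 1)
  have h2 := h1.rpow_const (p := -α) (Or.inl (aux_spos x).ne')
  have h3 := (hasDerivAt_id x).mul h2
  refine h3.congr_deriv ?_
  rw [aux_rpow_eq α x]
  simp only [id]
  ring

lemma aux_deriv_bound (α x : ℝ) (hα1 : -1/2 < α) :
    min 1 (1-2*α) * (1+x^2:ℝ) ^ (-α) ≤ (1+x^2:ℝ) ^ (-α-1) * (1+(1-2*α)*x^2) ∧
    (1+x^2:ℝ) ^ (-α-1) * (1+(1-2*α)*x^2) ≤ 2 * (1+x^2:ℝ) ^ (-α) := by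
  have hp : (0:ℝ) < (1+x^2:ℝ) ^ (-α-1) := Real.rpow_pos_of_pos (aux_spos x) _
  have hm2 : min 1 (1-2*α) ≤ 1-2*α := min_le_right _ _
  have hm1 : min 1 (1-2*α) ≤ 1 := min_le_left _ _
  have hx2 : (0:ℝ) ≤ x^2 := sq_nonneg x
  have inner1 : min 1 (1-2*α) * (1+x^2) ≤ 1 + (1-2*α)*x^2 := by
    nlinarith [mul_le_mul_of_nonneg_right hm2 hx2]
  have inner2 : 1 + (1-2*α)*x^2 ≤ 2 * (1+x^2) := by nlinarith
  constructor
  · rw [aux_rpow_eq α x]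
    nlinarith [mul_le_mul_of_nonneg_left inner1 hp.le]
  · rw [aux_rpow_eq α x]
    nlinarith [mul_le_mul_of_nonneg_left inner2 hp.le]

lemma aux_sqrtpow (α y : ℝ) : (Real.sqrt (1+y^2) ^ α)^2 = (1+y^2:ℝ)^α := by
  rw [← Real.rpow_natCast (Real.sqrt (1+y^2) ^ α) 2,
    ← Real.rpow_mul (Real.sqrt_nonneg _), Real.sqrt_eq_rpow,
    ← Real.rpow_mul (by positivity : (0:ℝ) ≤ 1+y^2)]
  congr 1; push_cast; ring

lemma aux_Fsq (α x : ℝ) (hα1 : -1/2 < α) (hα2 : α < 1/2) :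
    (1/4:ℝ) * (1+x^2)^(1-2*α) ≤ 1 + (x * (1+x^2)^(-α))^2 ∧
    1 + (x * (1+x^2)^(-α))^2 ≤ 2 * (1+x^2)^(1-2*α) := by
  have hs0 : (0:ℝ) < 1 + x^2 := aux_spos x
  have hs1 : (1:ℝ) ≤ 1 + x^2 := by nlinarith [sq_nonneg x]
  have he : ((1+x^2:ℝ)^(-α))^2 = (1+x^2:ℝ)^(-(2*α)) := by
    rw [← Real.rpow_natCast ((1+x^2:ℝ)^(-α)) 2, ← Real.rpow_mul hs0.le]
    congr 1; push_cast; ring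
  have hprod : (1+x^2:ℝ)^(2*α) * (1+x^2:ℝ)^(-(2*α)) = 1 := by
    rw [← Real.rpow_add hs0]; simp
  have hsplit : (1+x^2:ℝ)^(1-2*α) = (1+x^2:ℝ)^(-(2*α)) * (1+x^2) := by
    rw [← Real.rpow_add_one (ne_of_gt hs0) (-(2*α))]
    congr 1; ring
  have hepos : (0:ℝ) < (1+x^2:ℝ)^(-(2*α)) := Real.rpow_pos_of_pos hs0 _
  have hApos : (0:ℝ) < (1+x^2:ℝ)^(2*α) := Real.rpow_pos_of_pos hs0 _
  have hAle : (1+x^2:ℝ)^(2*α) ≤ 1+x^2 := by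
    calc (1+x^2:ℝ)^(2*α) ≤ (1+x^2:ℝ)^(1:ℝ) :=
          Real.rpow_le_rpow_of_exponent_le hs1 (by linarith)
    _ = 1+x^2 := Real.rpow_one _
  have key : (1/4:ℝ) * (1+x^2) ≤ (1+x^2:ℝ)^(2*α) + x^2 ∧
      (1+x^2:ℝ)^(2*α) + x^2 ≤ 2 * (1+x^2) := by
    constructor
    · rcases le_total (1+x^2:ℝ) 2 with h | h
      · have hge : ((1+x^2:ℝ))⁻¹ ≤ (1+x^2:ℝ)^(2*α) := by
          calc ((1+x^2:ℝ))⁻¹ = (1+x^2:ℝ)^(-1:ℝ) := by rw [Real.rpow_neg_one]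
          _ ≤ (1+x^2:ℝ)^(2*α) := Real.rpow_le_rpow_of_exponent_le hs1 (by linarith)
        have h2 : (1/2:ℝ) ≤ ((1+x^2:ℝ))⁻¹ := by
          have := one_div_le_one_div_of_le hs0 h
          simpa [one_div] using this
        nlinarith [sq_nonneg x]
      · nlinarith [hApos.le, sq_nonneg x]
    · nlinarith [sq_nonneg x]
  rw [mul_pow, he, hsplit]
  constructor
  · nlinarith [mul_le_mul_of_nonneg_right key.1 hepos.le, hprod]
  · nlinarith [mul_le_mul_of_nonneg_right key.2 hepos.le, hprod]

-- lower bound for F at infinity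
lemma aux_Flow (α : ℝ) (hα2 : α < 1/2) (x : ℝ) (hx : 1 ≤ x) :
    min 1 ((4:ℝ)^(-α)) * x ^ (1-2*α) ≤ x * (1+x^2:ℝ)^(-α) := by
  have hx0 : (0:ℝ) < x := lt_of_lt_of_le one_pos hx
  have hx2 : (0:ℝ) < x^2 := by positivity
  have hs0 : (0:ℝ) < 1 + x^2 := aux_spos x
  have hle1 : x^2 ≤ 1 + x^2 := by linarith
  have hle2 : 1 + x^2 ≤ 4*x^2 := by nlinarith
  have hxm : (x:ℝ)^(-(2*α)) = (x^2:ℝ)^(-α) := by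
    rw [← Real.rpow_natCast x 2, ← Real.rpow_mul hx0.le]
    congr 1; push_cast; ring
  have hmin : min ((x^2:ℝ)^(-α)) ((4:ℝ)^(-α) * (x^2:ℝ)^(-α)) ≤ (1+x^2:ℝ)^(-α) := by
    rcases le_total α 0 with hα | hα
    · refine le_trans (min_le_left _ _) ?_
      exact Real.rpow_le_rpow hx2.le hle1 (by linarith)
    · refine le_trans (min_le_right _ _) ?_
      rw [← Real.mul_rpow (by norm_num) hx2.le]
      have h1 : ((1+x^2:ℝ))^α ≤ (4*x^2:ℝ)^α := Real.rpow_le_rpow hs0.le hle2 hα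
      rw [Real.rpow_neg (by positivity), Real.rpow_neg hs0.le]
      exact inv_anti₀ (Real.rpow_pos_of_pos hs0 _) h1
  have hsplit : x ^ (1-2*α) = x * x ^ (-(2*α)) := by
    rw [show (1-2*α) = 1 + (-(2*α)) by ring, Real.rpow_add hx0, Real.rpow_one]
  rw [hsplit, ← mul_assoc, mul_comm (min 1 ((4:ℝ)^(-α))) x, mul_assoc]
  refine mul_le_mul_of_nonneg_left ?_ hx0.le
  rw [min_mul_of_nonneg _ _ (by positivity : (0:ℝ) ≤ x^(-(2*α))), one_mul, hxm]
  exact hmin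

lemma aux_sand (α x a b HH : ℝ) (hα1 : -1/2 < α) (hα2 : α < 1/2)
    (ha : 0 ≤ a)
    (l : a * |x * (1+x^2:ℝ)^(-α)| ≤ |HH|) (r : |HH| ≤ b * |x * (1+x^2:ℝ)^(-α)|) :
    min 1 (a^2) * (1/4) * (1+x^2:ℝ)^(1-2*α) ≤ 1 + HH^2 ∧
    1 + HH^2 ≤ max 1 (b^2) * 2 * (1+x^2:ℝ)^(1-2*α) := by
  set Fx := x * (1+x^2:ℝ)^(-α) with hFxdef
  have hsq1 : a^2 * Fx^2 ≤ HH^2 := by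
    have h := pow_le_pow_left₀ (mul_nonneg ha (abs_nonneg _)) l 2
    rw [mul_pow, sq_abs, sq_abs] at h
    exact h
  have hsq2 : HH^2 ≤ b^2 * Fx^2 := by
    have h := pow_le_pow_left₀ (abs_nonneg HH) r 2
    rw [mul_pow, sq_abs, sq_abs] at h
    exact h
  obtain ⟨fl, fr⟩ := aux_Fsq α x hα1 hα2
  rw [← hFxdef] at fl fr
  have hS0 : (0:ℝ) ≤ (1+x^2:ℝ)^(1-2*α) := (Real.rpow_pos_of_pos (aux_spos x) _).le
  constructor
  · have m1 : (0:ℝ) ≤ min 1 (a^2) := le_min zero_le_one (sq_nonneg a)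
    have e1 := mul_le_mul_of_nonneg_left fl m1
    nlinarith [min_le_left 1 (a^2), min_le_right 1 (a^2), sq_nonneg Fx]
  · have m2 : (0:ℝ) ≤ max 1 (b^2) := le_trans zero_le_one (le_max_left _ _)
    have e1 := mul_le_mul_of_nonneg_left fr m2
    nlinarith [le_max_left 1 (b^2), le_max_right 1 (b^2), sq_nonneg Fx]

lemma aux_final (α K1 K2 Hx x : ℝ) (hα2 : α < 1/2) (hK1 : 0 < K1) (hK2 : 0 < K2)
    (sl : K1 * (1+x^2:ℝ)^(1-2*α) ≤ 1 + Hx^2)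
    (sr : 1 + Hx^2 ≤ K2 * (1+x^2:ℝ)^(1-2*α)) :
    K1 ^ ((1-2*α)⁻¹) * Real.sqrt (1 + x^2) ^ 2 ≤
      Real.sqrt (1 + Hx^2) ^ (2 - (-4*α/(1-2*α))) ∧
    Real.sqrt (1 + Hx^2) ^ (2 - (-4*α/(1-2*α))) ≤
      K2 ^ ((1-2*α)⁻¹) * Real.sqrt (1 + x^2) ^ 2 := by
  have h2α : (0:ℝ) < 1 - 2*α := by linarith
  have hq0 : (0:ℝ) ≤ (1-2*α)⁻¹ := (inv_pos.2 h2α).le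
  have hs0 : (0:ℝ) < 1 + x^2 := aux_spos x
  have hT0 : (0:ℝ) < 1 + Hx^2 := by positivity
  have hx20 : Real.sqrt (1+x^2) ^ 2 = 1+x^2 := Real.sq_sqrt hs0.le
  have hne : (1-2*α) ≠ 0 := h2α.ne'
  have hEq : (1/2:ℝ) * (2 - (-4*α/(1-2*α))) = (1-2*α)⁻¹ := by
    field_simp
    ring
  have hrw : Real.sqrt (1 + Hx^2) ^ (2 - (-4*α/(1-2*α))) =
      (1 + Hx^2) ^ ((1-2*α)⁻¹) := by
    rw [Real.sqrt_eq_rpow, ← Real.rpow_mul hT0.le, hEq]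
  have hSq : ((1+x^2:ℝ)^(1-2*α)) ^ ((1-2*α)⁻¹) = 1+x^2 := by
    rw [← Real.rpow_mul hs0.le, mul_inv_cancel₀ h2α.ne', Real.rpow_one]
  have hS0 : (0:ℝ) ≤ (1+x^2:ℝ)^(1-2*α) := (Real.rpow_pos_of_pos hs0 _).le
  constructor
  · rw [hrw, hx20]
    calc K1 ^ ((1-2*α)⁻¹) * (1+x^2)
        = K1 ^ ((1-2*α)⁻¹) * ((1+x^2:ℝ)^(1-2*α)) ^ ((1-2*α)⁻¹) := by rw [hSq]
      _ = (K1 * (1+x^2:ℝ)^(1-2*α)) ^ ((1-2*α)⁻¹) := (Real.mul_rpow hK1.le hS0).symm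
      _ ≤ (1 + Hx^2) ^ ((1-2*α)⁻¹) := Real.rpow_le_rpow (by positivity) sl hq0
  · rw [hrw, hx20]
    calc (1 + Hx^2) ^ ((1-2*α)⁻¹)
        ≤ (K2 * (1+x^2:ℝ)^(1-2*α)) ^ ((1-2*α)⁻¹) := Real.rpow_le_rpow hT0.le sr hq0
      _ = K2 ^ ((1-2*α)⁻¹) * ((1+x^2:ℝ)^(1-2*α)) ^ ((1-2*α)⁻¹) := Real.mul_rpow hK2.le hS0
      _ = K2 ^ ((1-2*α)⁻¹) * (1+x^2) := by rw [hSq]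

theorem stmt8 (α : ℝ) (hα1 : -1/2 < α) (hα2 : α < 1/2) (ψ : ℝ → ℝ)
    (hcont : Continuous ψ) (hpos : ∀ x, 0 < ψ x) (ψ1 ψ2 : ℝ) (hψ1 : 0 < ψ1)
    (hψ2 : 0 < ψ2)
    (hlow : ∀ x : ℝ, ψ1 * Real.sqrt (1 + x^2) ^ α ≤ ψ x)
    (hhigh : ∀ x : ℝ, ψ x ≤ ψ2 * Real.sqrt (1 + x^2) ^ α)
    (H : ℝ → ℝ) (hH : ∀ x : ℝ, H x = ∫ y in (0:ℝ)..x, ((ψ y)^2)⁻¹) :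
    StrictMono H ∧ Function.Bijective H ∧
    Tendsto (fun x => |H x|) (Filter.cocompact ℝ) Filter.atTop ∧
    ∃ c₁ > 0, ∃ c₂ > 0, ∀ x : ℝ,
      c₁ * Real.sqrt (1 + x^2) ^ 2 ≤ Real.sqrt (1 + (H x)^2) ^ (2 - (-4*α/(1-2*α))) ∧
      Real.sqrt (1 + (H x)^2) ^ (2 - (-4*α/(1-2*α))) ≤ c₂ * Real.sqrt (1 + x^2) ^ 2 := by
  have h2α : (0:ℝ) < 1 - 2*α := by linarith
  have hm0 : (0:ℝ) < min 1 (1-2*α) := lt_min one_pos h2α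
  have ha0 : (0:ℝ) < (ψ2^2)⁻¹/2 := by positivity
  have hb0 : (0:ℝ) < (ψ1^2)⁻¹/(min 1 (1-2*α)) := by positivity
  have hρcont : Continuous fun y : ℝ => (1+y^2:ℝ)^(-α) :=
    Continuous.rpow_const (by continuity) (fun x => Or.inl (aux_spos x).ne')
  have hDcont : Continuous fun y : ℝ => (1+y^2:ℝ)^(-α-1) * (1+(1-2*α)*y^2) :=
    Continuous.mul
      (Continuous.rpow_const (by continuity) (fun x => Or.inl (aux_spos x).ne'))
      (by continuity)
  have hgcont : Continuous fun y : ℝ => ((ψ y)^2)⁻¹ :=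
    (hcont.pow 2).inv₀ (fun y => pow_ne_zero 2 (hpos y).ne')
  have hgint : ∀ u v : ℝ, IntervalIntegrable (fun y => ((ψ y)^2)⁻¹) volume u v :=
    fun u v => hgcont.intervalIntegrable u v
  -- bounds on the integrand
  have hgb : ∀ y : ℝ, (ψ2^2)⁻¹ * (1+y^2:ℝ)^(-α) ≤ ((ψ y)^2)⁻¹ ∧
      ((ψ y)^2)⁻¹ ≤ (ψ1^2)⁻¹ * (1+y^2:ℝ)^(-α) := by
    intro y
    have hsq := aux_sqrtpow α y
    have hψy := hpos y
    have h1 : ψ1^2 * (1+y^2:ℝ)^α ≤ (ψ y)^2 := by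
      have h0 : (0:ℝ) ≤ ψ1 * Real.sqrt (1+y^2) ^ α := by positivity
      calc ψ1^2 * (1+y^2:ℝ)^α = (ψ1 * Real.sqrt (1+y^2) ^ α)^2 := by rw [mul_pow, hsq]
      _ ≤ (ψ y)^2 := pow_le_pow_left₀ h0 (hlow y) 2
    have h2 : (ψ y)^2 ≤ ψ2^2 * (1+y^2:ℝ)^α := by
      calc (ψ y)^2 ≤ (ψ2 * Real.sqrt (1+y^2) ^ α)^2 := pow_le_pow_left₀ hψy.le (hhigh y) 2
      _ = ψ2^2 * (1+y^2:ℝ)^α := by rw [mul_pow, hsq]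
    have hα0 : (0:ℝ) < (1+y^2:ℝ)^α := Real.rpow_pos_of_pos (aux_spos y) _
    have hinv : ∀ c : ℝ, 0 < c → (c^2 * (1+y^2:ℝ)^α)⁻¹ = (c^2)⁻¹ * (1+y^2:ℝ)^(-α) := by
      intro c hc
      rw [mul_inv, ← Real.rpow_neg (aux_spos y).le]
    constructor
    · rw [← hinv ψ2 hψ2]
      exact inv_anti₀ (by positivity) h2
    · rw [← hinv ψ1 hψ1]
      exact inv_anti₀ (by positivity) h1
  -- FTC for F
  have hFTC : ∀ a b : ℝ,
      (∫ y in a..b, (1+y^2:ℝ)^(-α-1) * (1+(1-2*α)*y^2)) =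
        b*(1+b^2:ℝ)^(-α) - a*(1+a^2:ℝ)^(-α) := by
    intro a b
    exact intervalIntegral.integral_eq_sub_of_hasDerivAt (fun x _ => aux_deriv α x)
      (hDcont.intervalIntegrable a b)
  -- segment estimates
  have hseg : ∀ u v : ℝ, u ≤ v →
      (ψ2^2)⁻¹/2 * (v*(1+v^2:ℝ)^(-α) - u*(1+u^2:ℝ)^(-α)) ≤ (∫ y in u..v, ((ψ y)^2)⁻¹) ∧
      min 1 (1-2*α) * (∫ y in u..v, ((ψ y)^2)⁻¹) ≤
        (ψ1^2)⁻¹ * (v*(1+v^2:ℝ)^(-α) - u*(1+u^2:ℝ)^(-α)) := by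
    intro u v huv
    have h1 : (ψ2^2)⁻¹ * (∫ y in u..v, (1+y^2:ℝ)^(-α)) ≤ ∫ y in u..v, ((ψ y)^2)⁻¹ := by
      rw [← intervalIntegral.integral_const_mul]
      exact intervalIntegral.integral_mono_on huv
        ((continuous_const.mul hρcont).intervalIntegrable u v) (hgint u v)
        (fun y _ => (hgb y).1)
    have h2 : (∫ y in u..v, ((ψ y)^2)⁻¹) ≤ (ψ1^2)⁻¹ * ∫ y in u..v, (1+y^2:ℝ)^(-α) := by
      rw [← intervalIntegral.integral_const_mul]
      exact intervalIntegral.integral_mono_on huv (hgint u v)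
        ((continuous_const.mul hρcont).intervalIntegrable u v)
        (fun y _ => (hgb y).2)
    have h3 : v*(1+v^2:ℝ)^(-α) - u*(1+u^2:ℝ)^(-α) ≤ 2 * ∫ y in u..v, (1+y^2:ℝ)^(-α) := by
      rw [← hFTC u v, ← intervalIntegral.integral_const_mul]
      exact intervalIntegral.integral_mono_on huv (hDcont.intervalIntegrable u v)
        ((continuous_const.mul hρcont).intervalIntegrable u v)
        (fun y _ => (aux_deriv_bound α y hα1).2)
    have h4 : min 1 (1-2*α) * (∫ y in u..v, (1+y^2:ℝ)^(-α)) ≤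
        v*(1+v^2:ℝ)^(-α) - u*(1+u^2:ℝ)^(-α) := by
      rw [← hFTC u v, ← intervalIntegral.integral_const_mul]
      exact intervalIntegral.integral_mono_on huv
        ((continuous_const.mul hρcont).intervalIntegrable u v)
        (hDcont.intervalIntegrable u v)
        (fun y _ => (aux_deriv_bound α y hα1).1)
    constructor
    · have e3 := mul_le_mul_of_nonneg_left h3 (le_of_lt ha0)
      nlinarith [h1]
    · have e2 := mul_le_mul_of_nonneg_left h2 hm0.le
      have e4 := mul_le_mul_of_nonneg_left h4 (show (0:ℝ) ≤ (ψ1^2)⁻¹ by positivity)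
      nlinarith
  -- signed bounds on either side of 0
  have hposside : ∀ x : ℝ, 0 ≤ x →
      (ψ2^2)⁻¹/2 * (x*(1+x^2:ℝ)^(-α)) ≤ H x ∧
      min 1 (1-2*α) * H x ≤ (ψ1^2)⁻¹ * (x*(1+x^2:ℝ)^(-α)) := by
    intro x hx
    have hs := hseg 0 x hx
    have e0 : (0:ℝ)*(1+(0:ℝ)^2:ℝ)^(-α) = 0 := zero_mul _
    rw [e0, sub_zero, ← hH x] at hs
    exact hs
  have hnegside : ∀ x : ℝ, x ≤ 0 →
      (ψ2^2)⁻¹/2 * (-(x*(1+x^2:ℝ)^(-α))) ≤ -H x ∧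
      min 1 (1-2*α) * (-H x) ≤ (ψ1^2)⁻¹ * (-(x*(1+x^2:ℝ)^(-α))) := by
    intro x hx
    have hs := hseg x 0 hx
    have e0 : (0:ℝ)*(1+(0:ℝ)^2:ℝ)^(-α) = 0 := zero_mul _
    have esym : (∫ y in x..(0:ℝ), ((ψ y)^2)⁻¹) = -∫ y in (0:ℝ)..x, ((ψ y)^2)⁻¹ :=
      intervalIntegral.integral_symm 0 x
    rw [e0, zero_sub, esym, ← hH x] at hs
    exact hs
  -- absolute-value bounds
  have habs : ∀ x : ℝ,
      (ψ2^2)⁻¹/2 * |x*(1+x^2:ℝ)^(-α)| ≤ |H x| ∧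
      |H x| ≤ (ψ1^2)⁻¹/(min 1 (1-2*α)) * |x*(1+x^2:ℝ)^(-α)| := by
    intro x
    have hρ0 : (0:ℝ) < (1+x^2:ℝ)^(-α) := Real.rpow_pos_of_pos (aux_spos x) _
    rcases le_total 0 x with hx | hx
    · obtain ⟨l, r⟩ := hposside x hx
      have hFnn : 0 ≤ x*(1+x^2:ℝ)^(-α) := mul_nonneg hx hρ0.le
      have hHnn : 0 ≤ H x := le_trans (by positivity) l
      rw [abs_of_nonneg hFnn, abs_of_nonneg hHnn]
      refine ⟨l, ?_⟩
      rw [div_mul_eq_mul_div, le_div_iff₀ hm0]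
      nlinarith
    · obtain ⟨l, r⟩ := hnegside x hx
      have hFnp : x*(1+x^2:ℝ)^(-α) ≤ 0 := mul_nonpos_of_nonpos_of_nonneg hx hρ0.le
      have hHnp : H x ≤ 0 := by nlinarith [mul_nonneg ha0.le (neg_nonneg.2 hFnp)]
      rw [abs_of_nonpos hFnp, abs_of_nonpos hHnp]
      refine ⟨l, ?_⟩
      rw [div_mul_eq_mul_div, le_div_iff₀ hm0]
      nlinarith
  -- quadratic sandwich
  have hsand : ∀ x : ℝ,
      min 1 (((ψ2^2)⁻¹/2)^2) * (1/4) * (1+x^2:ℝ)^(1-2*α) ≤ 1 + (H x)^2 ∧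
      1 + (H x)^2 ≤ max 1 (((ψ1^2)⁻¹/(min 1 (1-2*α)))^2) * 2 * (1+x^2:ℝ)^(1-2*α) := by
    intro x
    obtain ⟨l, r⟩ := habs x
    exact aux_sand α x _ _ (H x) hα1 hα2 ha0.le l r
  -- strict monotonicity
  have hSM : StrictMono H := by
    intro u v huv
    have hvals : ∀ y : ℝ, 0 < ((ψ y)^2)⁻¹ := fun y => inv_pos.2 (pow_pos (hpos y) 2)
    have h := intervalIntegral.intervalIntegral_pos_of_pos (hgint u v) hvals huv
    have hadd := intervalIntegral.integral_add_adjacent_intervals (hgint 0 u) (hgint u v)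
    rw [hH u, hH v]
    linarith
  -- continuity
  have hHcont : Continuous H := by
    have h := intervalIntegral.continuous_primitive hgint 0
    exact (funext hH : H = _) ▸ h
  -- tendsto atTop
  have hFtop : Tendsto (fun x : ℝ => x*(1+x^2:ℝ)^(-α)) atTop atTop := by
    have hc : (0:ℝ) < min 1 ((4:ℝ)^(-α)) :=
      lt_min one_pos (Real.rpow_pos_of_pos (by norm_num) _)
    refine tendsto_atTop_mono' atTop ?_
      ((tendsto_rpow_atTop (show (0:ℝ) < 1-2*α from h2α)).const_mul_atTop hc)
    filter_upwards [eventually_ge_atTop (1:ℝ)] with x hx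
    exact aux_Flow α hα2 x hx
  have hHtop : Tendsto H atTop atTop := by
    refine tendsto_atTop_mono' atTop ?_ (hFtop.const_mul_atTop ha0)
    filter_upwards [eventually_ge_atTop (0:ℝ)] with x hx
    exact (hposside x hx).1
  have hFbot : Tendsto (fun x : ℝ => x*(1+x^2:ℝ)^(-α)) atBot atBot := by
    rw [← tendsto_neg_atTop_iff]
    have h := hFtop.comp tendsto_neg_atBot_atTop
    refine h.congr ?_
    intro x
    show (-x)*(1+(-x)^2:ℝ)^(-α) = -(x*(1+x^2:ℝ)^(-α))
    rw [neg_sq]; ring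
  have hHbot : Tendsto H atBot atBot := by
    refine tendsto_atBot_mono' atBot ?_ (hFbot.const_mul_atBot ha0)
    filter_upwards [eventually_le_atBot (0:ℝ)] with x hx
    have := (hnegside x hx).1
    linarith
  have hcc : Tendsto (fun x => |H x|) (Filter.cocompact ℝ) Filter.atTop := by
    rw [cocompact_eq_atBot_atTop, tendsto_sup]
    exact ⟨tendsto_abs_atBot_atTop.comp hHbot, tendsto_abs_atTop_atTop.comp hHtop⟩
  refine ⟨hSM, ⟨hSM.injective, Continuous.surjective hHcont hHtop hHbot⟩, hcc, ?_⟩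
  have hK1 : (0:ℝ) < min 1 (((ψ2^2)⁻¹/2)^2) * (1/4) := by
    have h' : (0:ℝ) < min 1 (((ψ2^2)⁻¹/2)^2) := lt_min one_pos (by positivity)
    linarith
  have hK2 : (0:ℝ) < max 1 (((ψ1^2)⁻¹/(min 1 (1-2*α)))^2) * 2 := by
    have h' : (0:ℝ) < max 1 (((ψ1^2)⁻¹/(min 1 (1-2*α)))^2) :=
      lt_of_lt_of_le one_pos (le_max_left _ _)
    linarith
  exact ⟨(min 1 (((ψ2^2)⁻¹/2)^2) * (1/4)) ^ ((1-2*α)⁻¹), Real.rpow_pos_of_pos hK1 _,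
    (max 1 (((ψ1^2)⁻¹/(min 1 (1-2*α)))^2) * 2) ^ ((1-2*α)⁻¹), Real.rpow_pos_of_pos hK2 _,
    fun x => aux_final α _ _ (H x) x hα2 hK1 hK2 (hsand x).1 (hsand x).2⟩
end

section
/- Let α ≥ 0 and let ψ : ℝ → (0, ∞) be continuous with ψ₁⟨x⟩^α ≤ ψ ≤ ψ₂⟨x⟩^α. Suppose u : ℝ → [0, ∞) satisfies ‖ψ u‖_{L¹} ≤ M and ‖ψ^{−1} u‖_{L^∞} ≤ K(1+s)^{−(1+2α)/2} for some s ≥ 0 and constants M, K > 0. Then there is a constant C depending only on α, ψ₁, ψ₂ such that ∫_ℝ ψ(x)^{−1} u(x) dx ≤ C (M + K)(1 + s)^{−α}. -/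
open MeasureTheory Real Filter

theorem stmt19 (α : ℝ) (hα : 0 ≤ α) (ψ1 ψ2 : ℝ) (hψ1 : 0 < ψ1) (hψ2 : 0 < ψ2) :
    ∃ C > 0, ∀ ψ : ℝ → ℝ, Continuous ψ → (∀ x, 0 < ψ x) →
      (∀ x : ℝ, ψ1 * Real.sqrt (1 + x^2) ^ α ≤ ψ x) →
      (∀ x : ℝ, ψ x ≤ ψ2 * Real.sqrt (1 + x^2) ^ α) →
      ∀ u : ℝ → ℝ, Measurable u → (∀ x, 0 ≤ u x) →
      ∀ M K s : ℝ, 0 < M → 0 < K → 0 ≤ s →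
      (∫⁻ x, ENNReal.ofReal (ψ x * u x)) ≤ ENNReal.ofReal M →
      (∀ᵐ x : ℝ ∂(volume : Measure ℝ), u x / ψ x ≤ K * (1+s) ^ (-(1+2*α)/2)) →
      (∫⁻ x, ENNReal.ofReal (u x / ψ x)) ≤
        ENNReal.ofReal (C * (M+K) * (1+s) ^ (-α)) := by
  refine ⟨2 + 1/ψ1^2, by positivity, ?_⟩
  intro ψ hψc hψpos hlow hupp u hu hupos M K s hM hK hs hL1 hLinf
  have ht0 : (0:ℝ) < 1 + s := by linarith
  set A : Set ℝ := {x | x^2 ≤ 1 + s} with hA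
  have hAm : MeasurableSet A := measurableSet_le (by fun_prop) measurable_const
  -- volume of A
  have hAeq : A = Set.Icc (-Real.sqrt (1+s)) (Real.sqrt (1+s)) := by
    ext x
    simp only [hA, Set.mem_setOf_eq, Set.mem_Icc, ← abs_le]
    constructor
    · intro h
      calc |x| = Real.sqrt (x^2) := (Real.sqrt_sq_eq_abs x).symm
        _ ≤ Real.sqrt (1+s) := Real.sqrt_le_sqrt h
    · intro h
      calc x^2 = |x|^2 := (sq_abs x).symm
        _ ≤ (Real.sqrt (1+s))^2 := by
            exact pow_le_pow_left₀ (abs_nonneg x) h 2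
        _ = 1 + s := Real.sq_sqrt ht0.le
  have hvolA : volume A = ENNReal.ofReal (2 * Real.sqrt (1+s)) := by
    rw [hAeq, Real.volume_Icc]
    ring_nf
  -- bound on A
  have hb1 : (∫⁻ x in A, ENNReal.ofReal (u x / ψ x)) ≤
      ENNReal.ofReal (K * (1+s) ^ (-(1+2*α)/2) * (2 * Real.sqrt (1+s))) := by
    calc (∫⁻ x in A, ENNReal.ofReal (u x / ψ x))
        ≤ ∫⁻ _ in A, ENNReal.ofReal (K * (1+s) ^ (-(1+2*α)/2)) := by
          refine lintegral_mono_ae ?_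
          exact (ae_restrict_of_ae hLinf).mono fun x hx => ENNReal.ofReal_le_ofReal hx
      _ = ENNReal.ofReal (K * (1+s) ^ (-(1+2*α)/2)) * volume A := by
          rw [setLIntegral_const]
      _ = ENNReal.ofReal (K * (1+s) ^ (-(1+2*α)/2) * (2 * Real.sqrt (1+s))) := by
          rw [hvolA, ← ENNReal.ofReal_mul (by positivity)]
  -- bound on Aᶜ
  have hd : (0:ℝ) < ψ1^2 * (1+s)^α := by positivity
  have hptw : ∀ x ∈ Aᶜ, ENNReal.ofReal (u x / ψ x) ≤
      ENNReal.ofReal ((ψ1^2 * (1+s)^α)⁻¹) * ENNReal.ofReal (ψ x * u x) := by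
    intro x hx
    have hx' : 1 + s < x^2 := by
      simpa [hA, Set.mem_setOf_eq, not_le] using hx
    have hsa : (Real.sqrt (1+s))^α = (1+s)^(α/2) := by
      rw [Real.sqrt_eq_rpow, ← Real.rpow_mul ht0.le]
      congr 1; ring
    have h1 : ψ1 * (1+s)^(α/2) ≤ ψ x := by
      calc ψ1 * (1+s)^(α/2) = ψ1 * (Real.sqrt (1+s))^α := by rw [hsa]
        _ ≤ ψ1 * (Real.sqrt (1+x^2))^α := by
            gcongr <;> nlinarith
        _ ≤ ψ x := hlow x
    have hhalf : (1+s)^(α/2) * (1+s)^(α/2) = (1+s)^α := by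
      rw [← Real.rpow_add ht0]; ring_nf
    have key : ψ1^2 * (1+s)^α ≤ ψ x * ψ x := by
      have h0 : 0 ≤ ψ1 * (1+s)^(α/2) := by positivity
      calc ψ1^2 * (1+s)^α = (ψ1 * (1+s)^(α/2)) * (ψ1 * (1+s)^(α/2)) := by
            rw [← hhalf]; ring
        _ ≤ ψ x * ψ x := mul_le_mul h1 h1 h0 (hψpos x).le
    rw [← ENNReal.ofReal_mul (by positivity)]
    refine ENNReal.ofReal_le_ofReal ?_
    rw [div_le_iff₀ (hψpos x), inv_mul_eq_div, div_mul_eq_mul_div, le_div_iff₀ hd]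
    nlinarith [hupos x, mul_nonneg (hupos x) (sub_nonneg.mpr key)]
  have hb2 : (∫⁻ x in Aᶜ, ENNReal.ofReal (u x / ψ x)) ≤
      ENNReal.ofReal ((ψ1^2 * (1+s)^α)⁻¹) * ENNReal.ofReal M := by
    calc (∫⁻ x in Aᶜ, ENNReal.ofReal (u x / ψ x))
        ≤ ∫⁻ x in Aᶜ, ENNReal.ofReal ((ψ1^2 * (1+s)^α)⁻¹) * ENNReal.ofReal (ψ x * u x) := by
          refine setLIntegral_mono (by fun_prop) hptw
      _ ≤ ∫⁻ x, ENNReal.ofReal ((ψ1^2 * (1+s)^α)⁻¹) * ENNReal.ofReal (ψ x * u x) :=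
          setLIntegral_le_lintegral _ _
      _ = ENNReal.ofReal ((ψ1^2 * (1+s)^α)⁻¹) * ∫⁻ x, ENNReal.ofReal (ψ x * u x) :=
          lintegral_const_mul' _ _ ENNReal.ofReal_ne_top
      _ ≤ _ := mul_le_mul_right hL1 _
  -- combine
  have hsplit : (∫⁻ x, ENNReal.ofReal (u x / ψ x)) =
      (∫⁻ x in A, ENNReal.ofReal (u x / ψ x)) + ∫⁻ x in Aᶜ, ENNReal.ofReal (u x / ψ x) :=
    (lintegral_add_compl _ hAm).symm
  rw [hsplit]
  calc (∫⁻ x in A, ENNReal.ofReal (u x / ψ x)) + ∫⁻ x in Aᶜ, ENNReal.ofReal (u x / ψ x)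
      ≤ ENNReal.ofReal (K * (1+s) ^ (-(1+2*α)/2) * (2 * Real.sqrt (1+s))) +
        ENNReal.ofReal ((ψ1^2 * (1+s)^α)⁻¹) * ENNReal.ofReal M :=
        add_le_add hb1 hb2
    _ = ENNReal.ofReal (K * (1+s) ^ (-(1+2*α)/2) * (2 * Real.sqrt (1+s)) +
        (ψ1^2 * (1+s)^α)⁻¹ * M) := by
        rw [← ENNReal.ofReal_mul (by positivity), ← ENNReal.ofReal_add (by positivity) (by positivity)]
    _ ≤ ENNReal.ofReal ((2 + 1/ψ1^2) * (M+K) * (1+s) ^ (-α)) := by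
        refine ENNReal.ofReal_le_ofReal ?_
        have h1 : (1+s) ^ (-(1+2*α)/2) * Real.sqrt (1+s) = (1+s) ^ (-α) := by
          rw [Real.sqrt_eq_rpow, ← Real.rpow_add ht0]
          ring_nf
        have h2 : ((1+s)^α)⁻¹ = (1+s)^(-α) := by
          rw [← Real.rpow_neg ht0.le]
        have hp : (0:ℝ) < (1+s)^(-α) := Real.rpow_pos_of_pos ht0 _
        have hψ1sq : (0:ℝ) < ψ1^2 := by positivity
        calc K * (1+s) ^ (-(1+2*α)/2) * (2 * Real.sqrt (1+s)) + (ψ1^2 * (1+s)^α)⁻¹ * M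
            = 2*K * ((1+s) ^ (-(1+2*α)/2) * Real.sqrt (1+s)) + (ψ1^2)⁻¹ * ((1+s)^α)⁻¹ * M := by
              rw [mul_inv]; ring
          _ = (2*K + (ψ1^2)⁻¹ * M) * (1+s)^(-α) := by rw [h1, h2]; ring
          _ ≤ (2 + 1/ψ1^2) * (M+K) * (1+s) ^ (-α) := by
              have : 2*K + (ψ1^2)⁻¹ * M ≤ (2 + 1/ψ1^2) * (M+K) := by
                rw [one_div]
                have hi : (0:ℝ) < (ψ1^2)⁻¹ := by positivity
                nlinarith
              nlinarith
end
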